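/- arXiv:2211.17129 — 6 statements merged into one kernel-verified Lean document; each statement's English description precedes it below -/
import Mathlib

section
/- Let Δ = conv{v_0, v_1, …, v_n} ⊆ ℝ^n be an n-dimensional simplex whose vertices v_0, …, v_n are affinely independent points of ℤ^n. Then for every j ≥ 0, the coefficient of X^j in the power series (1−X)^{n+1}·Ehr_Δ(X) equals the number of fundamental parallelepiped points λ of Δ with height Σ_i λ_i = j. Equivalently, (1−X)^{n+1}·Ehr_Δ(X) = Σ_λ X^{Σ_i λ_i}, the sum running over all fundamental parallelepiped points λ of Δ. -/
open scoped BigOperators Pointwise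

/-- Ehrhart series of a (bounded) set `P ⊆ ℝ^n`: the coefficient of `X^t` is the
number of lattice points of `ℤ^n` in the dilate `t • P`. -/
noncomputable def ehrhartSeries {n : ℕ} (P : Set (Fin n → ℝ)) : PowerSeries ℤ :=
  PowerSeries.mk fun t =>
    (Set.ncard {x : Fin n → ℤ | (fun i => (x i : ℝ)) ∈ (t : ℝ) • P} : ℤ)

/-- `lam` is a fundamental parallelepiped point for the simplex with vertices `v`:
`0 ≤ lam i < 1` for all `i` and `∑ i, lam i • (1, v i) ∈ ℤ^{n+1}`. -/
def IsFPP {N n : ℕ} (v : Fin N → Fin n → ℝ) (lam : Fin N → ℝ) : Prop :=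
  (∀ i, 0 ≤ lam i ∧ lam i < 1) ∧
  (∃ z : ℤ, ∑ i, lam i = (z : ℝ)) ∧
  (∀ j, ∃ z : ℤ, ∑ i, lam i * v i j = (z : ℝ))

/-!
A lattice point `x` of `t • Δ` is `∑ i, c i • v i` for a unique `c ≥ 0` with `∑ i, c i = t`
(affine independence), and `c` ranges exactly over the points of the lattice cone
`{c ≥ 0 | ∑ i, c i • (1, v i) ∈ ℤ^{n+1}}` of height `t`. Splitting `c = fract c + ⌊c⌋₊`
identifies the lattice cone with pairs `(λ, m)` of a fundamental parallelepiped point and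
`m ∈ ℕ^{n+1}`, the heights adding up. So `Ehr_Δ` is the product of `∑_λ X^{height λ}` with
`∑_m X^{∑ m} = (1 - X)^{-(n+1)}`.
-/

open Set Finset

section CountingSeries

variable {α β : Type*}

noncomputable def countingSeries (d : α → ℕ) : PowerSeries ℤ :=
  PowerSeries.mk fun k => (Nat.card {a // d a = k} : ℤ)

theorem coeff_countingSeries (d : α → ℕ) (k : ℕ) :
    PowerSeries.coeff k (countingSeries d) = Nat.card {a // d a = k} :=
  PowerSeries.coeff_mk _ _

theorem countingSeries_congr {d : α → ℕ} {e : β → ℕ} (f : α ≃ β) (h : ∀ a, e (f a) = d a) :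
    countingSeries d = countingSeries e := by
  ext k
  rw [coeff_countingSeries, coeff_countingSeries,
    Nat.card_congr (f.subtypeEquiv (p := (d · = k)) (q := (e · = k)) fun a => by rw [h])]

def addFiberEquiv (d : α → ℕ) (e : β → ℕ) (k : ℕ) :
    {p : α × β // d p.1 + e p.2 = k} ≃
      Σ q : antidiagonal k, {a // d a = q.1.1} × {b // e b = q.1.2} where
  toFun p := ⟨⟨(d p.1.1, e p.1.2), mem_antidiagonal.2 p.2⟩, ⟨p.1.1, rfl⟩, ⟨p.1.2, rfl⟩⟩
  invFun q := ⟨(q.2.1, q.2.2), by rw [q.2.1.2, q.2.2.2]; exact mem_antidiagonal.1 q.1.2⟩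
  left_inv _ := rfl
  right_inv := by
    rintro ⟨⟨⟨i, j⟩, h⟩, ⟨a, ha⟩, ⟨b, hb⟩⟩
    dsimp only at ha hb
    subst ha hb
    rfl

theorem countingSeries_add {d : α → ℕ} {e : β → ℕ} [∀ k, Finite {a // d a = k}]
    [∀ k, Finite {b // e b = k}] :
    countingSeries (fun p : α × β => d p.1 + e p.2) = countingSeries d * countingSeries e := by
  ext k
  rw [PowerSeries.coeff_mul, coeff_countingSeries, Nat.card_congr (addFiberEquiv d e k),
    Nat.card_sigma, Nat.cast_sum, ← Finset.sum_coe_sort (antidiagonal k)]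
  simp [coeff_countingSeries, Nat.card_prod]

instance (N k : ℕ) : Fintype {m : Fin N → ℕ // ∑ i, m i = k} :=
  Fintype.subtype _ fun _ => Finset.Nat.mem_antidiagonalTuple

theorem countingSeries_nat : countingSeries (fun a : ℕ => a) = PowerSeries.mk 1 := by
  ext k
  simp [coeff_countingSeries]

theorem countingSeries_sum_fin (N : ℕ) :
    countingSeries (fun m : Fin N → ℕ => ∑ i, m i) = PowerSeries.mk 1 ^ N := by
  induction N with
  | zero =>
    ext k
    cases k <;> simp [coeff_countingSeries, PowerSeries.coeff_one]
  | succ N ih =>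
    rw [pow_succ', ← ih, ← countingSeries_nat, ← countingSeries_add]
    exact (countingSeries_congr (Fin.consEquiv fun _ => ℕ) fun p => Fin.sum_cons _ _).symm

theorem one_sub_X_pow_mul_countingSeries_sum_fin (N : ℕ) :
    (1 - PowerSeries.X) ^ N * countingSeries (fun m : Fin N → ℕ => ∑ i, m i) = 1 := by
  rw [countingSeries_sum_fin, ← mul_pow, mul_comm, PowerSeries.mk_one_mul_one_sub_eq_one, one_pow]

end CountingSeries

section ConvexHull

variable {ι E : Type*} [Fintype ι] [AddCommGroup E] [Module ℝ E]

theorem convexHull_range_eq_image_stdSimplex (V : ι → E) :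
    convexHull ℝ (range V) = (fun w => ∑ i, w i • V i) '' stdSimplex ℝ ι := by
  classical
  refine (convexHull_min ?_ ?_).antisymm ?_
  · rintro _ ⟨i, rfl⟩
    exact ⟨Pi.single i 1, single_mem_stdSimplex ℝ i, by simp [Pi.single_apply]⟩
  · convert (convex_stdSimplex ℝ ι).linear_image (Fintype.linearCombination ℝ V)
    exact (Fintype.linearCombination_apply ℝ V _).symm
  · rintro _ ⟨w, hw, rfl⟩
    exact mem_convexHull_of_exists_fintype w V hw.1 hw.2 (mem_range_self ·) rfl

theorem mem_smul_convexHull_range_iff [Nonempty ι] (V : ι → E) {t : ℝ} (ht : 0 ≤ t) (x : E) :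
    x ∈ t • convexHull ℝ (range V) ↔
      ∃ c : ι → ℝ, (∀ i, 0 ≤ c i) ∧ ∑ i, c i = t ∧ ∑ i, c i • V i = x := by
  rw [convexHull_range_eq_image_stdSimplex, ← Set.image_smul, image_image]
  constructor
  · rintro ⟨w, hw, rfl⟩
    exact ⟨t • w, fun i => mul_nonneg ht (hw.1 i), by simp [← Finset.mul_sum, hw.2],
      by simp [Finset.smul_sum, smul_smul]⟩
  · rintro ⟨c, hc, rfl, rfl⟩
    rcases (Finset.sum_nonneg fun i _ => hc i).eq_or_lt with hzero | hpos
    · classical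
      obtain ⟨i⟩ := ‹Nonempty ι›
      refine ⟨Pi.single i 1, single_mem_stdSimplex ℝ i, ?_⟩
      have hc0 : ∀ i, c i = 0 := fun i =>
        (Finset.sum_eq_zero_iff_of_nonneg fun i _ => hc i).1 hzero.symm i (mem_univ i)
      simp [hc0]
    · refine ⟨(∑ i, c i)⁻¹ • c, ⟨fun i => ?_, ?_⟩, ?_⟩
      · exact mul_nonneg (inv_nonneg.2 hpos.le) (hc i)
      · simp [← Finset.mul_sum, hpos.ne']
      · simp [Finset.smul_sum, smul_smul, hpos.ne']

end ConvexHull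

theorem exists_intCast_eq_add_intCast_iff {R : Type*} [Ring R] (a : R) (k : ℤ) :
    (∃ z : ℤ, a + k = z) ↔ ∃ z : ℤ, a = z :=
  ⟨fun ⟨z, h⟩ => ⟨z - k, by rw [Int.cast_sub, ← h, add_sub_cancel_right]⟩,
    fun ⟨z, h⟩ => ⟨z + k, by rw [h, Int.cast_add]⟩⟩

section FloorRing

variable {R : Type*} [Ring R] [LinearOrder R]

theorem fract_add_natFloor [FloorRing R] {a : R} (ha : 0 ≤ a) : Int.fract a + ⌊a⌋₊ = a := by
  rw [natCast_floor_eq_intCast_floor ha, Int.fract_add_floor]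

variable [IsStrictOrderedRing R]

theorem intCast_floor_eq [FloorRing R] {x : R} (h : ∃ z : ℤ, x = z) : (⌊x⌋ : R) = x := by
  obtain ⟨z, rfl⟩ := h
  rw [Int.floor_intCast]

theorem floor_mem_Icc_of_abs_le [FloorRing R] {x : R} {b : ℤ} (h : |x| ≤ b) :
    ⌊x⌋ ∈ Set.Icc (-b) b :=
  ⟨Int.le_floor.2 (by rw [Int.cast_neg]; exact neg_le_of_abs_le h),
    Int.cast_le.1 ((Int.floor_le x).trans ((le_abs_self x).trans h))⟩

theorem abs_sum_mul_le_sum_abs {ι : Type*} [Fintype ι] {c : ι → R}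
    (hc : ∀ i, 0 ≤ c i ∧ c i ≤ 1) (w : ι → R) : |∑ i, c i * w i| ≤ ∑ i, |w i| :=
  (Finset.abs_sum_le_sum_abs _ _).trans <| Finset.sum_le_sum fun i _ => by
    rw [abs_mul, abs_of_nonneg (hc i).1]
    exact mul_le_of_le_one_left (abs_nonneg _) (hc i).2

end FloorRing

section Lattice

variable {ι : Type*} [Fintype ι]

noncomputable def coneHeight (c : ι → ℝ) : ℕ := ⌊∑ i, c i⌋₊

theorem natCast_coneHeight {c : ι → ℝ} (hc : ∀ i, 0 ≤ c i) (hz : ∃ z : ℤ, ∑ i, c i = z) :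
    (coneHeight c : ℝ) = ∑ i, c i := by
  obtain ⟨z, hz⟩ := hz
  lift z to ℕ using by exact_mod_cast hz ▸ sum_nonneg fun i _ => hc i
  rw [coneHeight, hz, Int.cast_natCast, Nat.floor_natCast]

theorem coneHeight_add_natCast {c : ι → ℝ} (hc : ∀ i, 0 ≤ c i) (m : ι → ℕ) :
    coneHeight (fun i => c i + m i) = coneHeight c + ∑ i, m i := by
  rw [coneHeight, sum_add_distrib, ← Nat.cast_sum,
    Nat.floor_add_natCast (sum_nonneg fun i _ => hc i), coneHeight]

theorem card_coneHeight_fiber {P : (ι → ℝ) → Prop}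
    (hP : ∀ c, P c → (coneHeight c : ℝ) = ∑ i, c i) (t : ℕ) :
    Nat.card {c : {c // P c} // coneHeight c.1 = t} = {c | P c ∧ ∑ i, c i = t}.ncard := by
  rw [← Nat.card_coe_set_eq]
  refine Nat.card_congr ((Equiv.subtypeEquivRight fun c => ?_).trans
    (Equiv.subtypeSubtypeEquivSubtypeInter P (∑ i, · i = t)))
  rw [← hP c c.2, Nat.cast_inj]

variable {n : ℕ} (v : ι → Fin n → ℤ)

/-- `∑ i, c i • (1, v i)` lies in `ℤ^{n+1}`. -/
def IsIntegralCombination (c : ι → ℝ) : Prop :=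
  (∃ z : ℤ, ∑ i, c i = z) ∧ ∀ j, ∃ z : ℤ, ∑ i, c i * v i j = z

theorem isIntegralCombination_add_natCast_iff {c : ι → ℝ} (m : ι → ℕ) :
    IsIntegralCombination v (fun i => c i + m i) ↔ IsIntegralCombination v c := by
  have hsum : ∑ i, (c i + m i) = ∑ i, c i + ((∑ i, (m i : ℤ) : ℤ) : ℝ) := by
    push_cast
    exact sum_add_distrib
  have hcoord (j : Fin n) : ∑ i, (c i + m i) * v i j =
      ∑ i, c i * v i j + ((∑ i, (m i : ℤ) * v i j : ℤ) : ℝ) := by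
    push_cast
    simp only [add_mul, sum_add_distrib]
  simp only [IsIntegralCombination, hsum, hcoord, exists_intCast_eq_add_intCast_iff]

noncomputable def integralPoint (c : ι → ℝ) : ℤ × (Fin n → ℤ) :=
  (⌊∑ i, c i⌋, fun j => ⌊∑ i, c i * v i j⌋)

theorem injOn_integralPoint (hv : AffineIndependent ℝ fun i j => (v i j : ℝ)) :
    InjOn (integralPoint v) {c | IsIntegralCombination v c} := by
  rintro c ⟨hs, hj⟩ c' ⟨hs', hj'⟩ h
  simp only [integralPoint, Prod.mk.injEq, funext_iff] at h
  refine funext fun i => hv.eq_of_sum_eq_sum (s := univ) ?_ ?_ i (mem_univ i)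
  · rw [← intCast_floor_eq hs, ← intCast_floor_eq hs', h.1]
  · ext j
    simp only [Finset.sum_apply, Pi.smul_apply, smul_eq_mul]
    rw [← intCast_floor_eq (hj j), ← intCast_floor_eq (hj' j), h.2 j]

def latticeCone : Set (ι → ℝ) := {c | (∀ i, 0 ≤ c i) ∧ IsIntegralCombination v c}

theorem ncard_latticePoints_smul_convexHull [Nonempty ι]
    (hv : AffineIndependent ℝ fun i j => (v i j : ℝ)) (t : ℕ) :
    {x : Fin n → ℤ |
        (fun j => (x j : ℝ)) ∈ (t : ℝ) • convexHull ℝ (range fun i j => (v i j : ℝ))}.ncard =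
      {c | c ∈ latticeCone v ∧ ∑ i, c i = t}.ncard := by
  have himage : {x : Fin n → ℤ |
      (fun j => (x j : ℝ)) ∈ (t : ℝ) • convexHull ℝ (range fun i j => (v i j : ℝ))} =
      (fun c => (integralPoint v c).2) '' {c | c ∈ latticeCone v ∧ ∑ i, c i = t} := by
    ext x
    simp only [mem_ofPred_eq, mem_smul_convexHull_range_iff _ (Nat.cast_nonneg t), funext_iff,
      Finset.sum_apply, Pi.smul_apply, smul_eq_mul, mem_image]
    constructor
    · rintro ⟨c, hc0, hsum, hx⟩
      refine ⟨c, ⟨⟨hc0, ⟨t, by simp [hsum]⟩, fun j => ⟨x j, hx j⟩⟩, hsum⟩, fun j => ?_⟩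
      simp [integralPoint, hx j]
    · rintro ⟨c, ⟨hc, hsum⟩, hx⟩
      refine ⟨c, hc.1, hsum, fun j => ?_⟩
      rw [← hx j, integralPoint, intCast_floor_eq (hc.2.2 j)]
  rw [himage, InjOn.ncard_image]
  rintro c ⟨hc, hsum⟩ c' ⟨hc', hsum'⟩ h
  exact injOn_integralPoint v hv hc.2 hc'.2
    (Prod.ext (by simp only [integralPoint, hsum, hsum']) h)

end Lattice

section FundamentalParallelepiped

variable {N n : ℕ}

theorem coeff_countingSeries_coneHeight_isFPP (V : Fin N → Fin n → ℝ) (j : ℕ) :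
    PowerSeries.coeff j (countingSeries fun lam : {lam // IsFPP V lam} => coneHeight lam.1) =
      {lam | IsFPP V lam ∧ ∑ i, lam i = j}.ncard := by
  rw [coeff_countingSeries,
    card_coneHeight_fiber fun lam h => natCast_coneHeight (fun i => (h.1 i).1) h.2.1]

variable (v : Fin N → Fin n → ℤ)

theorem finite_isFPP (hv : AffineIndependent ℝ fun i j => (v i j : ℝ)) :
    {lam | IsFPP (fun i j => (v i j : ℝ)) lam}.Finite := by
  classical
  let B : ℤ × (Fin n → ℤ) := (N, fun j => ∑ i, |v i j|)
  refine Set.Finite.of_injOn (f := integralPoint v) (t := Set.Icc (-B) B) ?_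
    ((injOn_integralPoint v hv).mono fun lam h => h.2) (Set.finite_Icc _ _)
  rintro lam ⟨hb, -⟩
  have hb' : ∀ i, 0 ≤ lam i ∧ lam i ≤ 1 := fun i => ⟨(hb i).1, (hb i).2.le⟩
  have hsum : ⌊∑ i, lam i⌋ ∈ Set.Icc (-(N : ℤ)) N :=
    floor_mem_Icc_of_abs_le (by simpa using abs_sum_mul_le_sum_abs hb' 1)
  have hcoord (j : Fin n) : ⌊∑ i, lam i * v i j⌋ ∈ Set.Icc (-∑ i, |v i j|) (∑ i, |v i j|) :=
    floor_mem_Icc_of_abs_le (by simpa using abs_sum_mul_le_sum_abs hb' fun i => (v i j : ℝ))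
  exact ⟨⟨hsum.1, fun j => (hcoord j).1⟩, ⟨hsum.2, fun j => (hcoord j).2⟩⟩

noncomputable def latticeConeEquiv :
    latticeCone v ≃ {lam // IsFPP (fun i j => (v i j : ℝ)) lam} × (Fin N → ℕ) where
  toFun c := (⟨fun i => Int.fract (c.1 i), fun i => ⟨Int.fract_nonneg _, Int.fract_lt_one _⟩,
      (isIntegralCombination_add_natCast_iff v fun i => ⌊c.1 i⌋₊).1
        (by simpa only [fract_add_natFloor (c.2.1 _)] using c.2.2)⟩,
    fun i => ⌊c.1 i⌋₊)
  invFun p := ⟨fun i => p.1.1 i + p.2 i, fun i => add_nonneg (p.1.2.1 i).1 (Nat.cast_nonneg _),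
    (isIntegralCombination_add_natCast_iff v p.2).2 p.1.2.2⟩
  left_inv c := Subtype.ext <| funext fun i => fract_add_natFloor (c.2.1 i)
  right_inv := by
    rintro ⟨⟨lam, hb, -⟩, m⟩
    refine Prod.ext (Subtype.ext <| funext fun i => ?_) (funext fun i => ?_)
    · exact (Int.fract_add_natCast _ _).trans (Int.fract_eq_self.2 (hb i))
    · show ⌊lam i + m i⌋₊ = m i
      rw [Nat.floor_add_natCast (hb i).1, Nat.floor_eq_zero.2 (hb i).2, zero_add]

theorem countingSeries_latticeCone (hv : AffineIndependent ℝ fun i j => (v i j : ℝ)) :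
    countingSeries (fun c : latticeCone v => coneHeight c.1) =
      countingSeries (fun lam : {lam // IsFPP (fun i j => (v i j : ℝ)) lam} => coneHeight lam.1) *
        countingSeries (fun m : Fin N → ℕ => ∑ i, m i) := by
  have : Finite {lam // IsFPP (fun i j => (v i j : ℝ)) lam} := (finite_isFPP v hv).to_subtype
  rw [← countingSeries_add]
  exact (countingSeries_congr (latticeConeEquiv v).symm fun p =>
    coneHeight_add_natCast (fun i => (p.1.2.1 i).1) p.2).symm

theorem ehrhartSeries_eq_countingSeries_latticeCone [NeZero N]
    (hv : AffineIndependent ℝ fun i j => (v i j : ℝ)) :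
    ehrhartSeries (convexHull ℝ (Set.range fun i j => (v i j : ℝ))) =
      countingSeries (fun c : latticeCone v => coneHeight c.1) := by
  ext t
  rw [ehrhartSeries, PowerSeries.coeff_mk, coeff_countingSeries,
    ncard_latticePoints_smul_convexHull v hv,
    card_coneHeight_fiber fun c hc => natCast_coneHeight hc.1 hc.2.1]

end FundamentalParallelepiped

theorem stmt0 {n : ℕ} (v : Fin (n + 1) → Fin n → ℤ)
    (hv : AffineIndependent ℝ fun i => fun j => ((v i j : ℤ) : ℝ)) (j : ℕ) :
    PowerSeries.coeff j
      ((1 - PowerSeries.X : PowerSeries ℤ) ^ (n + 1) *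
        ehrhartSeries (convexHull ℝ (Set.range fun i => fun j' => ((v i j' : ℤ) : ℝ)))) =
      (Set.ncard {lam : Fin (n + 1) → ℝ |
        IsFPP (fun i j' => ((v i j' : ℤ) : ℝ)) lam ∧ ∑ i, lam i = (j : ℝ)} : ℤ) := by
  rw [ehrhartSeries_eq_countingSeries_latticeCone v hv, countingSeries_latticeCone v hv,
    mul_left_comm, one_sub_X_pow_mul_countingSeries_sum_fin, mul_one,
    coeff_countingSeries_coneHeight_isFPP]
end

section
/- Let P ⊆ ℝ^p be a p-dimensional lattice polytope and Q ⊆ ℝ^q a q-dimensional lattice polytope. Then, as formal power series in ℤ[[X]], (1−X)^{p+q+2}·Ehr_{P⋆Q}(X) = ((1−X)^{p+1}·Ehr_P(X)) · ((1−X)^{q+1}·Ehr_Q(X)), where P⋆Q ⊆ ℝ^{p+q+1} is the join of P and Q. -/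
/-!
A lattice point of `t • (P ⋆ Q)` has the form `(x, y, j)` with `j ∈ {0, …, t}`, `x` a lattice point
of `(t - j) • P` and `y` one of `j • Q`: since `P` and `Q` are convex, `P ⋆ Q` is the union of the
segments joining `P × {0} × {0}` to `{0} × Q × {1}`, and the last coordinate records the position on
the segment. Counting by the last coordinate gives `L_{P⋆Q}(t) = ∑_{i+j=t} L_P(i) L_Q(j)`, i.e.
`Ehr_{P⋆Q} = Ehr_P · Ehr_Q`, and the theorem follows from
`(1 - X)^{p+q+2} = (1 - X)^{p+1} (1 - X)^{q+1}`.
-/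

open scoped BigOperators Pointwise

/-- `P` is a lattice polytope: the convex hull of finitely many integer points. -/
def IsLatticePolytope {n : ℕ} (P : Set (Fin n → ℝ)) : Prop :=
  ∃ V : Finset (Fin n → ℤ),
    P = convexHull ℝ ((fun v : Fin n → ℤ => fun i => (v i : ℝ)) '' ↑V)

/-- The join `P ⋆ Q ⊆ ℝ^{p+q+1}`. -/
noncomputable def joinPolytope {p q : ℕ} (P : Set (Fin p → ℝ)) (Q : Set (Fin q → ℝ)) :
    Set (Fin (p + q + 1) → ℝ) :=
  convexHull ℝ
    ((fun x : Fin p → ℝ =>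
        Fin.append (Fin.append x (0 : Fin q → ℝ)) (fun _ : Fin 1 => (0 : ℝ))) '' P ∪
     (fun y : Fin q → ℝ =>
        Fin.append (Fin.append (0 : Fin p → ℝ) y) (fun _ : Fin 1 => (1 : ℝ))) '' Q)

section JoinCoords

variable {α : Type*} {p q : ℕ}

def joinCoords (x : Fin p → α) (y : Fin q → α) (s : α) : Fin (p + q + 1) → α :=
  Fin.append (Fin.append x y) fun _ => s

theorem joinCoords_inj {x x' : Fin p → α} {y y' : Fin q → α} {s s' : α} :
    joinCoords x y s = joinCoords x' y' s' ↔ x = x' ∧ y = y' ∧ s = s' := by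
  refine ⟨fun h => ⟨funext fun i => ?_, funext fun j => ?_, ?_⟩, ?_⟩
  · simpa [joinCoords] using congrFun h (Fin.castAdd 1 (Fin.castAdd q i))
  · simpa [joinCoords] using congrFun h (Fin.castAdd 1 (Fin.natAdd p j))
  · simpa [joinCoords] using congrFun h (Fin.natAdd (p + q) 0)
  · rintro ⟨rfl, rfl, rfl⟩
    rfl

theorem joinCoords_surjective (z : Fin (p + q + 1) → α) : ∃ x y s, joinCoords x y s = z := by
  refine ⟨fun i => z (Fin.castAdd 1 (Fin.castAdd q i)), fun j => z (Fin.castAdd 1 (Fin.natAdd p j)),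
    z (Fin.natAdd (p + q) 0), funext fun k => ?_⟩
  refine Fin.addCases (fun k => Fin.addCases (fun i => ?_) (fun j => ?_) k) (fun l => ?_) k <;>
    simp [joinCoords, Fin.fin_one_eq_zero]

theorem comp_joinCoords {β : Type*} (f : α → β) (x : Fin p → α) (y : Fin q → α) (s : α) :
    (fun k => f (joinCoords x y s k)) = joinCoords (fun i => f (x i)) (fun j => f (y j)) (f s) := by
  funext k
  refine Fin.addCases (fun k => Fin.addCases (fun i => ?_) (fun j => ?_) k) (fun l => ?_) k <;>
    simp [joinCoords]

theorem joinCoords_add [Add α] (x x' : Fin p → α) (y y' : Fin q → α) (s s' : α) :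
    joinCoords x y s + joinCoords x' y' s' = joinCoords (x + x') (y + y') (s + s') := by
  funext k
  refine Fin.addCases (fun k => Fin.addCases (fun i => ?_) (fun j => ?_) k) (fun l => ?_) k <;>
    simp [joinCoords]

@[simp]
theorem joinCoords_zero [Zero α] : joinCoords (0 : Fin p → α) (0 : Fin q → α) 0 = 0 :=
  (comp_joinCoords (fun _ => (0 : α)) 0 0 0).symm

theorem smul_joinCoords {M : Type*} [SMul M α] (c : M) (x : Fin p → α) (y : Fin q → α) (s : α) :
    c • joinCoords x y s = joinCoords (c • x) (c • y) (c • s) :=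
  comp_joinCoords (c • ·) x y s

end JoinCoords

def latticePoints {n : ℕ} (S : Set (Fin n → ℝ)) : Set (Fin n → ℤ) :=
  {x | (fun i => (x i : ℝ)) ∈ S}

theorem coeff_ehrhartSeries {n : ℕ} (P : Set (Fin n → ℝ)) (t : ℕ) :
    PowerSeries.coeff t (ehrhartSeries P) = (latticePoints ((t : ℝ) • P)).ncard :=
  PowerSeries.coeff_mk _ _

theorem Bornology.IsBounded.finite_latticePoints {n : ℕ} {S : Set (Fin n → ℝ)}
    (hS : Bornology.IsBounded S) : (latticePoints S).Finite :=
  have hcast : Isometry fun (x : Fin n → ℤ) i => (x i : ℝ) :=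
    .piMap _ fun _ => Real.isometry_intCast
  (hcast.antilipschitz.isBounded_preimage hS).isCompact_closure.finite_of_discrete.subset
    subset_closure

theorem IsLatticePolytope.convex {n : ℕ} {P : Set (Fin n → ℝ)} (hP : IsLatticePolytope P) :
    Convex ℝ P := by
  obtain ⟨V, rfl⟩ := hP
  exact convex_convexHull ℝ _

theorem IsLatticePolytope.isBounded {n : ℕ} {P : Set (Fin n → ℝ)} (hP : IsLatticePolytope P) :
    Bornology.IsBounded P := by
  obtain ⟨V, rfl⟩ := hP
  exact ((V.finite_toSet.image _).isCompact_convexHull (𝕜 := ℝ)).isBounded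

section JoinPolytope

open Finset

variable {p q : ℕ} {P : Set (Fin p → ℝ)} {Q : Set (Fin q → ℝ)}

theorem Convex.image_joinCoords_left (hP : Convex ℝ P) (y : Fin q → ℝ) (s : ℝ) :
    Convex ℝ ((joinCoords · y s) '' P) := by
  rintro _ ⟨x₁, h₁, rfl⟩ _ ⟨x₂, h₂, rfl⟩ a b ha hb hab
  refine ⟨a • x₁ + b • x₂, hP h₁ h₂ ha hb hab, ?_⟩
  simp only [smul_joinCoords, joinCoords_add, ← add_smul, hab, one_smul]

theorem Convex.image_joinCoords_right (hQ : Convex ℝ Q) (x : Fin p → ℝ) (s : ℝ) :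
    Convex ℝ ((joinCoords x · s) '' Q) := by
  rintro _ ⟨y₁, h₁, rfl⟩ _ ⟨y₂, h₂, rfl⟩ a b ha hb hab
  refine ⟨a • y₁ + b • y₂, hQ h₁ h₂ ha hb hab, ?_⟩
  simp only [smul_joinCoords, joinCoords_add, ← add_smul, hab, one_smul]

theorem joinPolytope_eq_convexJoin (hP : Convex ℝ P) (hQ : Convex ℝ Q) (hP₀ : P.Nonempty)
    (hQ₀ : Q.Nonempty) :
    joinPolytope P Q = convexJoin ℝ ((joinCoords · 0 0) '' P) ((joinCoords 0 · 1) '' Q) :=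
  (hP.image_joinCoords_left 0 0).convexHull_union (hQ.image_joinCoords_right 0 1)
    (hP₀.image _) (hQ₀.image _)

theorem joinCoords_mem_smul_joinPolytope (hP : Convex ℝ P) (hQ : Convex ℝ Q) (hP₀ : P.Nonempty)
    (hQ₀ : Q.Nonempty) {t : ℝ} (ht : 0 ≤ t) {x : Fin p → ℝ} {y : Fin q → ℝ} {s : ℝ} :
    joinCoords x y s ∈ t • joinPolytope P Q ↔ 0 ≤ s ∧ s ≤ t ∧ x ∈ (t - s) • P ∧ y ∈ s • Q := by
  rw [joinPolytope_eq_convexJoin hP hQ hP₀ hQ₀]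
  constructor
  · rintro ⟨_, hw, h⟩
    obtain ⟨_, ⟨u, hu, rfl⟩, _, ⟨v, hv, rfl⟩, a, b, ha, hb, hab, rfl⟩ := mem_convexJoin.1 hw
    simp only [smul_joinCoords, joinCoords_add, smul_zero, add_zero, zero_add, joinCoords_inj,
      smul_smul, smul_eq_mul, mul_zero, mul_one] at h
    obtain ⟨rfl, rfl, rfl⟩ := h
    have hts : t - t * b = t * a := by linear_combination (-t) * hab
    refine ⟨by positivity, by nlinarith, ?_, Set.smul_mem_smul_set hv⟩
    rw [hts]
    exact Set.smul_mem_smul_set hu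
  · rintro ⟨hs₀, hst, ⟨u, hu, rfl⟩, ⟨v, hv, rfl⟩⟩
    rcases ht.eq_or_lt with rfl | ht₀
    · obtain rfl : s = 0 := le_antisymm hst hs₀
      refine ⟨joinCoords u 0 0, subset_convexJoin_left (hQ₀.image _) ⟨u, hu, rfl⟩, ?_⟩
      simp
    · refine ⟨((t - s) / t) • joinCoords u 0 0 + (s / t) • joinCoords 0 v 1,
        segment_subset_convexJoin (Set.mem_image_of_mem _ hu) (Set.mem_image_of_mem _ hv)
          ⟨_, _, div_nonneg (sub_nonneg.2 hst) ht, div_nonneg hs₀ ht, by field_simp; ring, rfl⟩, ?_⟩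
      simp [smul_joinCoords, joinCoords_add, smul_smul, mul_div_cancel₀ _ ht₀.ne']

theorem latticePoints_smul_joinPolytope (hP : Convex ℝ P) (hQ : Convex ℝ Q) (hP₀ : P.Nonempty)
    (hQ₀ : Q.Nonempty) (t : ℕ) :
    latticePoints ((t : ℝ) • joinPolytope P Q) =
      ⋃ ij ∈ antidiagonal t,
        (fun xy : (Fin p → ℤ) × (Fin q → ℤ) => joinCoords xy.1 xy.2 (ij.2 : ℤ)) ''
        (latticePoints ((ij.1 : ℝ) • P) ×ˢ latticePoints ((ij.2 : ℝ) • Q)) := by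
  ext z
  obtain ⟨x, y, s, rfl⟩ := joinCoords_surjective z
  simp only [latticePoints, Set.mem_ofPred_eq, comp_joinCoords,
    joinCoords_mem_smul_joinPolytope hP hQ hP₀ hQ₀ (Nat.cast_nonneg t), Set.mem_iUnion,
    Set.mem_image, Set.mem_prod, Prod.exists, joinCoords_inj, HasAntidiagonal.mem_antidiagonal,
    exists_prop]
  constructor
  · rintro ⟨hs₀, hst, hx, hy⟩
    lift s to ℕ using (by exact_mod_cast hs₀)
    have hst : s ≤ t := by exact_mod_cast hst
    refine ⟨t - s, s, Nat.sub_add_cancel hst, x, y, ⟨?_, hy⟩, rfl, rfl, rfl⟩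
    simpa [Nat.cast_sub hst] using hx
  · rintro ⟨a, b, rfl, x, y, ⟨hx, hy⟩, rfl, rfl, rfl⟩
    refine ⟨by positivity, by push_cast; linarith, ?_, hy⟩
    simpa using hx

theorem ncard_latticePoints_smul_joinPolytope (hP : Convex ℝ P) (hQ : Convex ℝ Q)
    (hP₀ : P.Nonempty) (hQ₀ : Q.Nonempty) (hPb : Bornology.IsBounded P)
    (hQb : Bornology.IsBounded Q) (t : ℕ) :
    (latticePoints ((t : ℝ) • joinPolytope P Q)).ncard =
      ∑ ij ∈ antidiagonal t,
        (latticePoints ((ij.1 : ℝ) • P)).ncard * (latticePoints ((ij.2 : ℝ) • Q)).ncard := by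
  have hinj (b : ℤ) :
      Function.Injective fun xy : (Fin p → ℤ) × (Fin q → ℤ) => joinCoords xy.1 xy.2 b :=
    fun _ _ h => Prod.ext (joinCoords_inj.1 h).1 (joinCoords_inj.1 h).2.1
  rw [latticePoints_smul_joinPolytope hP hQ hP₀ hQ₀, ← set_biUnion_coe,
    (antidiagonal t).finite_toSet.ncard_biUnion, finsum_mem_coe_finset]
  · refine sum_congr rfl fun ij _ => ?_
    rw [Set.ncard_image_of_injective _ (hinj _), Set.ncard_prod]
  · exact fun ij _ => ((hPb.smul₀ _).finite_latticePoints.prod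
      (hQb.smul₀ _).finite_latticePoints).image _
  · refine fun ij hij kl hkl hne => Set.disjoint_left.2 ?_
    rintro _ ⟨xy, -, rfl⟩ ⟨xy', -, h⟩
    refine hne ((HasAntidiagonal.antidiagonal_congr' hij hkl).2 ?_)
    exact_mod_cast (joinCoords_inj.1 h).2.2.symm

theorem ehrhartSeries_joinPolytope (hP : Convex ℝ P) (hQ : Convex ℝ Q)
    (hP₀ : P.Nonempty) (hQ₀ : Q.Nonempty) (hPb : Bornology.IsBounded P)
    (hQb : Bornology.IsBounded Q) :
    ehrhartSeries (joinPolytope P Q) = ehrhartSeries P * ehrhartSeries Q := by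
  ext t
  simp only [PowerSeries.coeff_mul, coeff_ehrhartSeries,
    ncard_latticePoints_smul_joinPolytope hP hQ hP₀ hQ₀ hPb hQb, Nat.cast_sum, Nat.cast_mul]

end JoinPolytope

theorem stmt1 {p q : ℕ} (P : Set (Fin p → ℝ)) (Q : Set (Fin q → ℝ))
    (hP : IsLatticePolytope P) (hPfull : affineSpan ℝ P = ⊤)
    (hQ : IsLatticePolytope Q) (hQfull : affineSpan ℝ Q = ⊤) :
    (1 - PowerSeries.X : PowerSeries ℤ) ^ (p + q + 2) * ehrhartSeries (joinPolytope P Q) =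
      ((1 - PowerSeries.X) ^ (p + 1) * ehrhartSeries P) *
        ((1 - PowerSeries.X) ^ (q + 1) * ehrhartSeries Q) := by
  have hP₀ : P.Nonempty := AffineSubspace.nonempty_of_affineSpan_eq_top ℝ _ _ hPfull
  have hQ₀ : Q.Nonempty := AffineSubspace.nonempty_of_affineSpan_eq_top ℝ _ _ hQfull
  rw [ehrhartSeries_joinPolytope hP.convex hQ.convex hP₀ hQ₀ hP.isBounded hQ.isBounded]
  ring
end

section
/- Let Q ⊆ ℝ^n be an n-dimensional lattice polytope containing the origin in its interior, let k ≥ 1 and d ≥ 1 be integers, and let R_d := Q ⊕ S_d ⊕ S_d ⊕ ⋯ ⊕ S_d (iterated free sum with k copies of S_d), an (n+kd)-dimensional lattice polytope in ℝ^{n+kd}. Then, as formal power series in ℤ[[X]], (1−X)^{n+kd+1}·Ehr_{R_d}(X) = ((1−X)^{n+1}·Ehr_Q(X)) · (1 + X + X² + ⋯ + X^d)^k. -/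
open scoped BigOperators Pointwise

/-- The free sum `P ⊕ Q ⊆ ℝ^{p+q}`. -/
noncomputable def freeSum {p q : ℕ} (P : Set (Fin p → ℝ)) (Q : Set (Fin q → ℝ)) :
    Set (Fin (p + q) → ℝ) :=
  convexHull ℝ
    ((fun x : Fin p → ℝ => Fin.append x (0 : Fin q → ℝ)) '' P ∪
     (fun y : Fin q → ℝ => Fin.append (0 : Fin p → ℝ) y) '' Q)

/-- The reflexive simplex `S_d = conv{e_1, …, e_d, -(e_1 + ⋯ + e_d)} ⊆ ℝ^d`. -/
noncomputable def Ssimplex (d : ℕ) : Set (Fin d → ℝ) :=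
  convexHull ℝ
    ((Set.range fun i : Fin d => fun j : Fin d => if j = i then (1 : ℝ) else 0) ∪
      {fun _ : Fin d => (-1 : ℝ)})

/-- Iterated free sum `Q ⊕ S_d ⊕ ⋯ ⊕ S_d` with `k` copies of `S_d`. -/
noncomputable def iterFreeSum {n : ℕ} (Q : Set (Fin n → ℝ)) (d : ℕ) :
    (k : ℕ) → Set (Fin (n + k * d) → ℝ)
  | 0 => cast (by rw [Nat.zero_mul, Nat.add_zero]) Q
  | k + 1 => cast (by rw [show n + k * d + d = n + (k + 1) * d from by ring])
      (freeSum (iterFreeSum Q d k) (Ssimplex d))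

/-!
The Ehrhart series of `P` is the generating function, by height, of the lattice points `(x, t)`
of the cone over `P` (those with `x ∈ t • P`). Every lattice point `y` of `ℝ^d` has an integral
level `ℓ(y)`: `y ∈ b • S_d ↔ ℓ(y) ≤ b` for real `b ≥ 0`. Hence, for `P` convex containing `0`,
a lattice point `(x, y)` lies in `t • (P ⊕ S_d)` iff `x ∈ (t - ℓ(y)) • P`, so the cone over
`P ⊕ S_d` is the product of the cone over `P` with `ℤ^d`, heights adding, and
`Ehr(P ⊕ S_d) = Ehr(P) · Σ_y X^ℓ(y)`.

`S_d` is the image of the standard simplex of `ℝ^{d+1}` under `w ↦ (w (i+1) - w 0)_i`, so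
`ℓ(y)` is the coordinate sum of the unique lift of `y` to `ℕ^{d+1}` having a zero coordinate.
Lifts without a zero coordinate are the shifts by `(1, …, 1)` of arbitrary ones, whence
`Σ_y X^ℓ(y) = (1 - X^{d+1}) / (1 - X)^{d+1}`, i.e. `(1 - X)^d Σ_y X^ℓ(y) = 1 + X + ⋯ + X^d`.
Induction on `k` finishes the proof.
-/

open PowerSeries Bornology

/-- `Nat.card` counts an infinite fibre as `0`, so the lemmas on these series need finite fibres. -/
noncomputable def weightSeries {α : Type*} (f : α → ℕ) : PowerSeries ℤ :=
  mk fun m => Nat.card {a // f a = m}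

section WeightSeries

variable {α β : Type*}

lemma weightSeries_comp_equiv (e : α ≃ β) (f : β → ℕ) :
    weightSeries (f ∘ e) = weightSeries f := by
  ext m
  simp only [weightSeries, coeff_mk]
  exact congrArg _ (Nat.card_congr (e.subtypeEquiv fun _ => Iff.rfl))

lemma weightSeries_add_const (f : α → ℕ) (c : ℕ) :
    weightSeries (fun a => f a + c) = X ^ c * weightSeries f := by
  ext m
  simp only [weightSeries, coeff_mk, coeff_X_pow_mul']
  split_ifs with h
  · exact congrArg _ (Nat.card_congr (Equiv.subtypeEquivRight fun a => by omega))
  · have : IsEmpty {a // f a + c = m} := ⟨fun a => h (by omega)⟩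
    simp

lemma weightSeries_sumElim (f : α → ℕ) (g : β → ℕ) (hf : ∀ m, Finite {a // f a = m})
    (hg : ∀ m, Finite {b // g b = m}) :
    weightSeries (Sum.elim f g) = weightSeries f + weightSeries g := by
  ext m
  simp only [weightSeries, coeff_mk, map_add]
  have : Finite {a // Sum.elim f g (.inl a) = m} := hf m
  have : Finite {b // Sum.elim f g (.inr b) = m} := hg m
  rw [Nat.card_congr Equiv.subtypeSum, Nat.card_sum]
  push_cast
  rfl

lemma weightSeries_prod (f : α → ℕ) (g : β → ℕ) (hf : ∀ m, Finite {a // f a = m})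
    (hg : ∀ m, Finite {b // g b = m}) :
    weightSeries (fun ab : α × β => f ab.1 + g ab.2) = weightSeries f * weightSeries g := by
  ext m
  let e : {ab : α × β // f ab.1 + g ab.2 = m} ≃
      Σ ij : Finset.HasAntidiagonal.antidiagonal m, {a // f a = ij.1.1} × {b // g b = ij.1.2} :=
    { toFun := fun ab => ⟨⟨(f ab.1.1, g ab.1.2), Finset.HasAntidiagonal.mem_antidiagonal.2 ab.2⟩,
        ⟨ab.1.1, rfl⟩, ⟨ab.1.2, rfl⟩⟩
      invFun := fun s => ⟨(s.2.1, s.2.2), by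
        rw [s.2.1.2, s.2.2.2]; exact Finset.HasAntidiagonal.mem_antidiagonal.1 s.1.2⟩
      left_inv := fun _ => rfl
      right_inv := by
        rintro ⟨⟨⟨i, j⟩, h⟩, ⟨a, ha⟩, ⟨b, hb⟩⟩
        dsimp only at ha hb
        subst ha hb
        rfl }
  simp only [weightSeries, coeff_mk, coeff_mul]
  rw [Nat.card_congr e, Nat.card_sigma]
  push_cast [Nat.card_prod]
  exact Finset.sum_coe_sort _ fun ij : ℕ × ℕ =>
    (Nat.card {a // f a = ij.1} : ℤ) * Nat.card {b // g b = ij.2}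

end WeightSeries

abbrev toRealVec {p : ℕ} (x : Fin p → ℤ) : Fin p → ℝ := fun i => (x i : ℝ)

lemma isometry_toRealVec {p : ℕ} : Isometry (toRealVec (p := p)) :=
  Isometry.of_dist_eq fun x y => by simp only [dist_pi_def]; congr 2

lemma finite_toRealVec_preimage {p : ℕ} {K : Set (Fin p → ℝ)} (hK : IsBounded K) :
    (toRealVec ⁻¹' K).Finite :=
  isCompact_iff_finite.1 <| Metric.isCompact_of_isClosed_isBounded (isClosed_discrete _)
    (isometry_toRealVec.antilipschitz.isBounded_preimage hK)

lemma toRealVec_append {p q : ℕ} (x : Fin p → ℤ) (y : Fin q → ℤ) :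
    toRealVec (Fin.append x y) = Fin.append (toRealVec x) (toRealVec y) := by
  ext i
  refine Fin.addCases (fun i => ?_) (fun i => ?_) i <;> simp

abbrev ConePoints {p : ℕ} (P : Set (Fin p → ℝ)) : Type :=
  {xt : (Fin p → ℤ) × ℕ // toRealVec xt.1 ∈ (xt.2 : ℝ) • P}

def ConePoints.height {p : ℕ} {P : Set (Fin p → ℝ)} (a : ConePoints P) : ℕ := a.1.2

def ConePoints.fiberEquiv {p : ℕ} (P : Set (Fin p → ℝ)) (t : ℕ) :
    {a : ConePoints P // a.height = t} ≃ toRealVec ⁻¹' ((t : ℝ) • P) where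
  toFun a := ⟨a.1.1.1, by obtain ⟨⟨⟨x, s⟩, hx⟩, rfl⟩ := a; exact hx⟩
  invFun x := ⟨⟨(x.1, t), x.2⟩, rfl⟩
  left_inv := by rintro ⟨⟨⟨x, t⟩, hx⟩, rfl⟩; rfl
  right_inv _ := rfl

lemma ehrhartSeries_eq_weightSeries {p : ℕ} (P : Set (Fin p → ℝ)) :
    ehrhartSeries P = weightSeries (ConePoints.height (P := P)) := by
  ext t
  simp only [ehrhartSeries, weightSeries, coeff_mk]
  rw [Nat.card_congr (ConePoints.fiberEquiv P t), Nat.card_coe_set_eq]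
  rfl

lemma ConePoints.finite_fiber {p : ℕ} {P : Set (Fin p → ℝ)} (hP : IsBounded P) (t : ℕ) :
    Finite {a : ConePoints P // a.height = t} :=
  have := (finite_toRealVec_preimage (hP.smul₀ (t : ℝ))).to_subtype
  Finite.of_equiv _ (ConePoints.fiberEquiv P t).symm

section FreeSum

variable {p q : ℕ}

lemma isLinearMap_append_zero :
    IsLinearMap ℝ (fun u : Fin p → ℝ => Fin.append u (0 : Fin q → ℝ)) := by
  constructor <;> intros <;> ext i <;> refine Fin.addCases (fun i => ?_) (fun i => ?_) i <;> simp

lemma isLinearMap_zero_append :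
    IsLinearMap ℝ (fun v : Fin q → ℝ => Fin.append (0 : Fin p → ℝ) v) := by
  constructor <;> intros <;> ext i <;> refine Fin.addCases (fun i => ?_) (fun i => ?_) i <;> simp

lemma isBounded_freeSum {P : Set (Fin p → ℝ)} {S : Set (Fin q → ℝ)} (hP : IsBounded P)
    (hS : IsBounded S) : IsBounded (freeSum P S) := by
  rw [freeSum, isBounded_convexHull]
  exact ((IsLinearMap.mk' _ isLinearMap_append_zero).toContinuousLinearMap.lipschitz.isBounded_image
    hP).union
    ((IsLinearMap.mk' _ isLinearMap_zero_append).toContinuousLinearMap.lipschitz.isBounded_image hS)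

lemma zero_mem_freeSum {P : Set (Fin p → ℝ)} (S : Set (Fin q → ℝ)) (hP : (0 : Fin p → ℝ) ∈ P) :
    (0 : Fin (p + q) → ℝ) ∈ freeSum P S :=
  subset_convexHull ℝ _ <| Or.inl ⟨0, hP, isLinearMap_append_zero.map_zero⟩

lemma append_mem_smul_freeSum_iff {P : Set (Fin p → ℝ)} {S : Set (Fin q → ℝ)}
    (hP : Convex ℝ P) (hS : Convex ℝ S) (hPne : P.Nonempty) (hSne : S.Nonempty) {r : ℝ}
    (hr : 0 ≤ r) (u : Fin p → ℝ) (v : Fin q → ℝ) :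
    Fin.append u v ∈ r • freeSum P S ↔
      ∃ a b : ℝ, 0 ≤ a ∧ 0 ≤ b ∧ a + b = r ∧ u ∈ a • P ∧ v ∈ b • S := by
  have hjoin : freeSum P S = convexJoin ℝ ((fun x => Fin.append x 0) '' P)
      ((fun y => Fin.append 0 y) '' S) := by
    rw [freeSum, convexHull_union (hPne.image _) (hSne.image _),
      (hP.is_linear_image isLinearMap_append_zero).convexHull_eq,
      (hS.is_linear_image isLinearMap_zero_append).convexHull_eq]
  have hcomb : ∀ (s t : ℝ) (x : Fin p → ℝ) (y : Fin q → ℝ),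
      r • (s • Fin.append x 0 + t • Fin.append 0 y) = Fin.append ((r * s) • x) ((r * t) • y) := by
    intro s t x y
    ext i
    refine Fin.addCases (fun i => ?_) (fun i => ?_) i <;> simp [mul_assoc]
  rw [hjoin]
  constructor
  · rintro ⟨_, hw, hz⟩
    obtain ⟨_, ⟨x, hx, rfl⟩, _, ⟨y, hy, rfl⟩, s, t, hs, ht, hst, rfl⟩ := mem_convexJoin.1 hw
    beta_reduce at hz
    rw [hcomb] at hz
    obtain ⟨rfl, rfl⟩ :=
      Prod.ext_iff.1 ((Fin.appendEquiv p q).injective (a₁ := (_, _)) (a₂ := (_, _)) hz)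
    exact ⟨r * s, r * t, by positivity, by positivity, by rw [← mul_add, hst, mul_one],
      Set.smul_mem_smul_set hx, Set.smul_mem_smul_set hy⟩
  · rintro ⟨a, b, ha, hb, rfl, ⟨x, hx, rfl⟩, ⟨y, hy, rfl⟩⟩
    have hra : (a + b) * (a / (a + b)) = a := mul_div_cancel_of_imp' fun h => by linarith
    refine ⟨_, mem_convexJoin.2 ⟨_, ⟨x, hx, rfl⟩, _, ⟨y, hy, rfl⟩, a / (a + b), 1 - a / (a + b),
      div_nonneg ha hr, sub_nonneg.2 (div_le_one_of_le₀ (by linarith) hr), add_sub_cancel _ _,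
      rfl⟩, ?_⟩
    beta_reduce
    rw [hcomb, hra, mul_one_sub, hra, add_sub_cancel_left]

end FreeSum

lemma Convex.smul_set_subset_smul_set {E : Type*} [AddCommGroup E] [Module ℝ E] {P : Set E}
    (hP : Convex ℝ P) (hP0 : (0 : E) ∈ P) {a b : ℝ} (ha : 0 ≤ a) (hab : a ≤ b) : a • P ⊆ b • P := by
  rintro _ ⟨x, hx, rfl⟩
  refine ⟨(a / b) • x, hP.smul_mem_of_zero_mem hP0 hx
    ⟨div_nonneg ha (ha.trans hab), div_le_one_of_le₀ hab (ha.trans hab)⟩, ?_⟩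
  show b • (a / b) • x = a • x
  rw [smul_smul, mul_div_cancel_of_imp' fun hb => by linarith]

/-- `g` is the gauge of `S` on lattice points, required to be integral; this is the case for
reflexive polytopes such as `S_d`. -/
def IsLatticeGauge {d : ℕ} (S : Set (Fin d → ℝ)) (g : (Fin d → ℤ) → ℕ) : Prop :=
  ∀ (y : Fin d → ℤ) (b : ℝ), 0 ≤ b → (toRealVec y ∈ b • S ↔ (g y : ℝ) ≤ b)

namespace IsLatticeGauge

variable {d : ℕ} {S : Set (Fin d → ℝ)} {g : (Fin d → ℤ) → ℕ}

lemma nonempty (hg : IsLatticeGauge S g) : S.Nonempty :=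
  Set.smul_set_nonempty.1 ⟨_, (hg 0 (g 0) (Nat.cast_nonneg _)).2 le_rfl⟩

lemma finite_fiber (hg : IsLatticeGauge S g) (hS : IsBounded S) (m : ℕ) :
    Finite {y // g y = m} :=
  ((finite_toRealVec_preimage (hS.smul₀ (m : ℝ))).subset fun y (hy : g y = m) =>
    (hg y m (Nat.cast_nonneg _)).2 (by exact_mod_cast hy.le)).to_subtype

end IsLatticeGauge

section FreeSumCone

variable {p d : ℕ} {P : Set (Fin p → ℝ)} {S : Set (Fin d → ℝ)} {g : (Fin d → ℤ) → ℕ}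

lemma toRealVec_append_mem_smul_freeSum_iff (hP : Convex ℝ P) (hP0 : (0 : Fin p → ℝ) ∈ P)
    (hS : Convex ℝ S) (hg : IsLatticeGauge S g) (t : ℕ) (x : Fin p → ℤ) (y : Fin d → ℤ) :
    toRealVec (Fin.append x y) ∈ (t : ℝ) • freeSum P S ↔
      g y ≤ t ∧ toRealVec x ∈ ((t - g y : ℕ) : ℝ) • P := by
  rw [toRealVec_append, append_mem_smul_freeSum_iff hP hS ⟨0, hP0⟩ hg.nonempty (Nat.cast_nonneg t)]
  constructor
  · rintro ⟨a, b, ha, hb, hab, hx, hy⟩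
    have hgb : (g y : ℝ) ≤ b := (hg y b hb).1 hy
    have hgt : g y ≤ t := by exact_mod_cast (hgb.trans (by linarith) : (g y : ℝ) ≤ t)
    refine ⟨hgt, hP.smul_set_subset_smul_set hP0 ha ?_ hx⟩
    rw [Nat.cast_sub hgt]
    linarith
  · rintro ⟨hgt, hx⟩
    exact ⟨_, _, Nat.cast_nonneg _, Nat.cast_nonneg _, by rw [Nat.cast_sub hgt]; ring, hx,
      (hg y _ (Nat.cast_nonneg _)).2 le_rfl⟩

def freeSumConeEquiv (hP : Convex ℝ P) (hP0 : (0 : Fin p → ℝ) ∈ P) (hS : Convex ℝ S)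
    (hg : IsLatticeGauge S g) : ConePoints (freeSum P S) ≃ ConePoints P × (Fin d → ℤ) where
  toFun z :=
    let xy := (Fin.appendEquiv p d).symm z.1.1
    have hxy : toRealVec (Fin.append xy.1 xy.2) ∈ (z.1.2 : ℝ) • freeSum P S := by
      rw [show Fin.append xy.1 xy.2 = z.1.1 from (Fin.appendEquiv p d).apply_symm_apply z.1.1]
      exact z.2
    (⟨(xy.1, z.1.2 - g xy.2),
      ((toRealVec_append_mem_smul_freeSum_iff hP hP0 hS hg _ _ _).1 hxy).2⟩, xy.2)
  invFun ay := ⟨(Fin.append ay.1.1.1 ay.2, ay.1.1.2 + g ay.2),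
    (toRealVec_append_mem_smul_freeSum_iff hP hP0 hS hg _ _ _).2
      ⟨Nat.le_add_left _ _, by rw [Nat.add_sub_cancel]; exact ay.1.2⟩⟩
  left_inv := by
    rintro ⟨⟨w, t⟩, hw⟩
    obtain ⟨⟨x, y⟩, rfl⟩ := (Fin.appendEquiv p d).surjective w
    have hgt := ((toRealVec_append_mem_smul_freeSum_iff hP hP0 hS hg t x y).1 hw).1
    simp only [Equiv.symm_apply_apply, Nat.sub_add_cancel hgt]
    rfl
  right_inv := by
    rintro ⟨⟨⟨x, i⟩, hx⟩, y⟩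
    simp

theorem ehrhartSeries_freeSum (hP : Convex ℝ P) (hPb : IsBounded P) (hP0 : (0 : Fin p → ℝ) ∈ P)
    (hS : Convex ℝ S) (hSb : IsBounded S) (hg : IsLatticeGauge S g) :
    ehrhartSeries (freeSum P S) = ehrhartSeries P * weightSeries g := by
  rw [ehrhartSeries_eq_weightSeries, ehrhartSeries_eq_weightSeries,
    ← weightSeries_prod _ _ (ConePoints.finite_fiber hPb) (hg.finite_fiber hSb),
    ← weightSeries_comp_equiv (freeSumConeEquiv hP hP0 hS hg).symm]
  rfl

end FreeSumCone

section Simplex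

variable {d : ℕ}

def succSubZero {R : Type*} [Sub R] (w : Fin (d + 1) → R) : Fin d → R :=
  fun i => w i.succ - w 0

lemma isLinearMap_succSubZero : IsLinearMap ℝ (succSubZero (R := ℝ) (d := d)) := by
  constructor <;> intros <;> ext <;> simp [succSubZero] <;> ring

lemma Ssimplex_eq_image_stdSimplex : Ssimplex d = succSubZero '' stdSimplex ℝ (Fin (d + 1)) := by
  rw [← convexHull_basis_eq_stdSimplex, isLinearMap_succSubZero.image_convexHull,
    ← Set.range_comp, Ssimplex]
  have : succSubZero ∘ (fun i j : Fin (d + 1) => if i = j then (1 : ℝ) else 0) =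
      Fin.cons (fun _ => -1) (fun i j => if j = i then 1 else 0) := by
    funext i
    refine Fin.cases ?_ (fun i => ?_) i <;> funext j <;> simp [succSubZero, eq_comm]
  rw [this, Fin.range_cons, Set.insert_eq, Set.union_comm]

lemma isBounded_Ssimplex : IsBounded (Ssimplex d) :=
  isBounded_convexHull.2 ((Set.finite_range _).union (Set.finite_singleton _)).isBounded

lemma convex_Ssimplex : Convex ℝ (Ssimplex d) := convex_convexHull ℝ _

lemma mem_smul_Ssimplex_iff {b : ℝ} (hb : 0 ≤ b) (x : Fin d → ℝ) :
    x ∈ b • Ssimplex d ↔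
      ∃ w : Fin (d + 1) → ℝ, (∀ i, 0 ≤ w i) ∧ ∑ i, w i = b ∧ succSubZero w = x := by
  rw [Ssimplex_eq_image_stdSimplex]
  constructor
  · rintro ⟨_, ⟨s, ⟨hs0, hs1⟩, rfl⟩, rfl⟩
    exact ⟨b • s, fun i => mul_nonneg hb (hs0 i), by simp [← Finset.mul_sum, hs1],
      isLinearMap_succSubZero.map_smul b s⟩
  · rintro ⟨w, hw0, rfl, rfl⟩
    rcases (Finset.sum_nonneg fun i _ => hw0 i).eq_or_lt with h | h
    · have hw : w = 0 := funext fun i =>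
        (Finset.sum_eq_zero_iff_of_nonneg fun i _ => hw0 i).1 h.symm i (Finset.mem_univ i)
      refine ⟨_, ⟨_, single_mem_stdSimplex ℝ 0, rfl⟩, ?_⟩
      beta_reduce
      rw [← h, hw, zero_smul, isLinearMap_succSubZero.map_zero]
    · refine ⟨_, ⟨(∑ i, w i)⁻¹ • w, ⟨fun i => mul_nonneg (inv_nonneg.2 h.le) (hw0 i), ?_⟩, rfl⟩,
        ?_⟩
      · simp [← Finset.mul_sum, h.ne']
      · beta_reduce
        rw [← isLinearMap_succSubZero.map_smul, smul_smul, mul_inv_cancel₀ h.ne', one_smul]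

def minLift (y : Fin d → ℤ) : Fin (d + 1) → ℕ :=
  fun j => ((Fin.cons 0 y : Fin (d + 1) → ℤ) j -
    Finset.univ.inf' Finset.univ_nonempty (Fin.cons 0 y : Fin (d + 1) → ℤ)).toNat

lemma succSubZero_minLift (y : Fin d → ℤ) : succSubZero (fun j => (minLift y j : ℤ)) = y := by
  ext i
  have h0 := Finset.inf'_le (Fin.cons 0 y : Fin (d + 1) → ℤ) (Finset.mem_univ 0)
  have hi := Finset.inf'_le (Fin.cons 0 y : Fin (d + 1) → ℤ) (Finset.mem_univ i.succ)
  simp only [Fin.cons_zero, Fin.cons_succ] at h0 hi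
  simp [succSubZero, minLift]
  omega

lemma exists_minLift_eq_zero (y : Fin d → ℤ) : ∃ j, minLift y j = 0 := by
  obtain ⟨j, -, hj⟩ := Finset.exists_mem_eq_inf' Finset.univ_nonempty
    (Fin.cons 0 y : Fin (d + 1) → ℤ)
  exact ⟨j, by simp [minLift, hj]⟩

lemma minLift_succSubZero {w : Fin (d + 1) → ℕ} (hw : ∃ j, w j = 0) :
    minLift (succSubZero fun j => (w j : ℤ)) = w := by
  have hcons : ∀ j, (Fin.cons 0 (succSubZero fun j => (w j : ℤ)) : Fin (d + 1) → ℤ) j =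
      w j - w 0 := fun j => Fin.cases (by simp) (fun i => by simp [succSubZero]) j
  have hinf : Finset.univ.inf' Finset.univ_nonempty
      (Fin.cons 0 (succSubZero fun j => (w j : ℤ)) : Fin (d + 1) → ℤ) = -w 0 := by
    obtain ⟨j, hj⟩ := hw
    refine le_antisymm ((Finset.inf'_le _ (Finset.mem_univ j)).trans ?_)
      (Finset.le_inf' _ _ fun j _ => ?_) <;> rw [hcons] <;> omega
  funext j
  simp only [minLift]
  rw [hinf, hcons]
  omega

def simplexLevel (y : Fin d → ℤ) : ℕ := ∑ j, minLift y j

lemma isLatticeGauge_Ssimplex : IsLatticeGauge (Ssimplex d) simplexLevel := by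
  intro y b hb
  rw [mem_smul_Ssimplex_iff hb]
  set m : Fin (d + 1) → ℝ := fun j => (minLift y j : ℝ)
  have hm : succSubZero m = toRealVec y := by
    conv_rhs => rw [← succSubZero_minLift y]
    ext i
    simp [m, succSubZero, toRealVec]
  have hlev : (simplexLevel y : ℝ) = ∑ j, m j := by simp [simplexLevel, m]
  constructor
  · rintro ⟨w, hw0, rfl, hwy⟩
    have hconst : ∀ j, w j = m j + (w 0 - m 0) := fun j => Fin.cases (by ring) (fun i => by
      have := congrFun (hwy.trans hm.symm) i
      simp only [succSubZero] at this
      linarith) j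
    obtain ⟨j₀, hj₀⟩ := exists_minLift_eq_zero y
    have hc : 0 ≤ w 0 - m 0 := by
      have := hw0 j₀
      rw [hconst j₀] at this
      simpa [m, hj₀] using this
    rw [hlev]
    exact Finset.sum_le_sum fun j _ => by rw [hconst j]; linarith
  · intro hle
    refine ⟨fun j => m j + (b - simplexLevel y) / (d + 1), fun j => by
      have : 0 ≤ b - simplexLevel y := by linarith
      positivity, ?_, ?_⟩
    · rw [Finset.sum_add_distrib, ← hlev, Finset.sum_const, Finset.card_univ, Fintype.card_fin,
        nsmul_eq_mul]
      push_cast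
      field_simp
      ring
    · rw [← hm]
      ext i
      simp [succSubZero]

end Simplex

section Counting

variable {d : ℕ}

lemma finite_sum_fiber (m : ℕ) : Finite {w : Fin (d + 1) → ℕ // ∑ i, w i = m} :=
  Finite.of_equiv _ (Sym.equivNatSumOfFintype _ _)

lemma weightSeries_sum_mul_one_sub_X_pow :
    weightSeries (fun w : Fin (d + 1) → ℕ => ∑ i, w i) * (1 - X) ^ (d + 1) = 1 := by
  convert mk_add_choose_mul_one_sub_pow_eq_one ℤ (d := d) using 2
  ext m
  rw [weightSeries, coeff_mk, coeff_mk, Nat.card_congr (Sym.equivNatSumOfFintype _ _).symm,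
    Nat.card_eq_fintype_card, Sym.card_sym_eq_choose, Fintype.card_fin,
    show d + 1 + m - 1 = d + m by omega, Nat.choose_symm_add]

def minLiftEquiv : (Fin d → ℤ) ≃ {w : Fin (d + 1) → ℕ // ∃ j, w j = 0} where
  toFun y := ⟨minLift y, exists_minLift_eq_zero y⟩
  invFun w := succSubZero fun j => (w.1 j : ℤ)
  left_inv := succSubZero_minLift
  right_inv w := Subtype.ext (minLift_succSubZero w.2)

def addOneEquiv : (Fin (d + 1) → ℕ) ≃ {w : Fin (d + 1) → ℕ // ¬∃ j, w j = 0} where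
  toFun v := ⟨v + 1, by simp⟩
  invFun w := w.1 - 1
  left_inv v := by simp
  right_inv w := by
    ext j
    exact Nat.sub_add_cancel (Nat.one_le_iff_ne_zero.2 fun h => w.2 ⟨j, h⟩)

def minLiftSumEquiv : (Fin d → ℤ) ⊕ (Fin (d + 1) → ℕ) ≃ (Fin (d + 1) → ℕ) :=
  (minLiftEquiv.sumCongr addOneEquiv).trans
    (Equiv.sumCompl fun w : Fin (d + 1) → ℕ => ∃ j, w j = 0)

lemma weightSeries_sum_eq :
    weightSeries (fun w : Fin (d + 1) → ℕ => ∑ i, w i) =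
      weightSeries (simplexLevel (d := d)) +
        X ^ (d + 1) * weightSeries (fun w : Fin (d + 1) → ℕ => ∑ i, w i) := by
  have hshift : ∀ m, Finite {v : Fin (d + 1) → ℕ // ∑ i, v i + (d + 1) = m} := fun m =>
    have := finite_sum_fiber (d := d) (m - (d + 1))
    Finite.of_injective (β := {w : Fin (d + 1) → ℕ // ∑ i, w i = m - (d + 1)})
      (fun v => ⟨v.1, by have := v.2; omega⟩)
      fun a b h => Subtype.ext (congrArg Subtype.val h :)
  rw [← weightSeries_add_const,
    ← weightSeries_sumElim _ _ (isLatticeGauge_Ssimplex.finite_fiber isBounded_Ssimplex) hshift,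
    ← weightSeries_comp_equiv minLiftSumEquiv]
  congr 1
  funext z
  rcases z with y | v
  · rfl
  · simp [minLiftSumEquiv, addOneEquiv, Finset.sum_add_distrib]

theorem one_sub_X_pow_mul_weightSeries_simplexLevel :
    (1 - X) ^ d * weightSeries (simplexLevel (d := d)) =
      ∑ i ∈ Finset.range (d + 1), (X : PowerSeries ℤ) ^ i := by
  linear_combination (-(1 - X) ^ d) * (weightSeries_sum_eq (d := d)) +
    (∑ i ∈ Finset.range (d + 1), (X : PowerSeries ℤ) ^ i) *
      (weightSeries_sum_mul_one_sub_X_pow (d := d)) -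
    (1 - X) ^ d * weightSeries (fun w : Fin (d + 1) → ℕ => ∑ i, w i) *
      geom_sum_mul_neg (X : PowerSeries ℤ) (d + 1)

end Counting

section IterFreeSum

lemma cast_setFin_congr {α : Sort*} {a b : ℕ} (h : a = b)
    (hc : Set (Fin a → ℝ) = Set (Fin b → ℝ)) (F : ∀ m, Set (Fin m → ℝ) → α)
    (P : Set (Fin a → ℝ)) : F b (cast hc P) = F a P := by
  subst h
  rfl

variable {n : ℕ} {Q : Set (Fin n → ℝ)} {d : ℕ}

lemma iterFreeSum_convex_isBounded_zero_mem (hQ : Convex ℝ Q) (hQb : IsBounded Q)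
    (hQ0 : (0 : Fin n → ℝ) ∈ Q) (k : ℕ) :
    Convex ℝ (iterFreeSum Q d k) ∧ IsBounded (iterFreeSum Q d k) ∧
      (0 : Fin (n + k * d) → ℝ) ∈ iterFreeSum Q d k := by
  induction k with
  | zero =>
    exact (cast_setFin_congr (by ring) _
      (fun m P => Convex ℝ P ∧ IsBounded P ∧ (0 : Fin m → ℝ) ∈ P) Q).mpr ⟨hQ, hQb, hQ0⟩
  | succ k ih =>
    obtain ⟨hconv, hbdd, hzero⟩ := ih
    exact (cast_setFin_congr (by ring) _
      (fun m P => Convex ℝ P ∧ IsBounded P ∧ (0 : Fin m → ℝ) ∈ P) _).mpr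
      ⟨convex_convexHull ℝ _, isBounded_freeSum hbdd isBounded_Ssimplex,
        zero_mem_freeSum _ hzero⟩

lemma ehrhartSeries_iterFreeSum (hQ : Convex ℝ Q) (hQb : IsBounded Q)
    (hQ0 : (0 : Fin n → ℝ) ∈ Q) (k : ℕ) :
    ehrhartSeries (iterFreeSum Q d k) =
      ehrhartSeries Q * weightSeries (simplexLevel (d := d)) ^ k := by
  induction k with
  | zero =>
    rw [pow_zero, mul_one]
    exact cast_setFin_congr (by ring) _ (fun _ P => ehrhartSeries P) Q
  | succ k ih =>
    obtain ⟨hconv, hbdd, hzero⟩ := iterFreeSum_convex_isBounded_zero_mem (d := d) hQ hQb hQ0 k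
    calc ehrhartSeries (iterFreeSum Q d (k + 1))
        = ehrhartSeries (freeSum (iterFreeSum Q d k) (Ssimplex d)) :=
          cast_setFin_congr (by ring) _ (fun _ P => ehrhartSeries P) _
      _ = ehrhartSeries Q * weightSeries simplexLevel ^ (k + 1) := by
        rw [ehrhartSeries_freeSum hconv hbdd hzero convex_Ssimplex isBounded_Ssimplex
          isLatticeGauge_Ssimplex, ih, pow_succ, mul_assoc]

end IterFreeSum

theorem stmt3_general {n : ℕ} (Q : Set (Fin n → ℝ))
    (hQ : IsLatticePolytope Q)
    (h0 : (0 : Fin n → ℝ) ∈ interior Q) (k d : ℕ) :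
    (1 - PowerSeries.X : PowerSeries ℤ) ^ (n + k * d + 1) *
        ehrhartSeries (iterFreeSum Q d k) =
      ((1 - PowerSeries.X) ^ (n + 1) * ehrhartSeries Q) *
        (∑ i ∈ Finset.range (d + 1), (PowerSeries.X : PowerSeries ℤ) ^ i) ^ k := by
  obtain ⟨V, rfl⟩ := hQ
  have hbdd : IsBounded (convexHull ℝ ((fun v : Fin n → ℤ => fun i => (v i : ℝ)) '' ↑V)) :=
    isBounded_convexHull.2 (V.finite_toSet.image _).isBounded
  rw [ehrhartSeries_iterFreeSum (convex_convexHull ℝ _) hbdd (interior_subset h0),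
    ← one_sub_X_pow_mul_weightSeries_simplexLevel]
  ring

theorem stmt3 {n : ℕ} (Q : Set (Fin n → ℝ))
    (hQ : IsLatticePolytope Q) (hQfull : affineSpan ℝ Q = ⊤)
    (h0 : (0 : Fin n → ℝ) ∈ interior Q) (k d : ℕ) (hk : 1 ≤ k) (hd : 1 ≤ d) :
    (1 - PowerSeries.X : PowerSeries ℤ) ^ (n + k * d + 1) *
        ehrhartSeries (iterFreeSum Q d k) =
      ((1 - PowerSeries.X) ^ (n + 1) * ehrhartSeries Q) *
        (∑ i ∈ Finset.range (d + 1), (PowerSeries.X : PowerSeries ℤ) ^ i) ^ k :=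
  stmt3_general Q hQ h0 k d
end

section
/- Fix an integer n ≥ 2, set d := 2n+2, and let q(n) := (1, 1, …, 1, 3n, 10n, 15n) ∈ ℤ^d (with 2n−1 entries equal to 1). Then the simplex Δ := conv{e_1, …, e_d, −q(n)} ⊆ ℝ^d is reflexive: it contains the origin in its interior, and its polar dual Δ° := {y ∈ ℝ^d : ⟨x, y⟩ ≤ 1 for all x ∈ Δ} is a lattice polytope, i.e., Δ° is the convex hull of a finite set of points of ℤ^d. -/
/-!
Write `m = 1 + ∑ qᵢ`. For `q` with positive entries, `Δ_{(1,q)}` has barycentric coordinates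
`(1 - ∑ xᵢ)/m` (at `-q`) and `xᵢ + qᵢ (1 - ∑ xⱼ)/m` (at `eᵢ`); they are continuous and positive at
the origin, so the origin is interior. The polar dual is cut out by the vertex
inequalities `yᵢ ≤ 1` and `-⟨q, y⟩ ≤ 1`, which is again a simplex, with vertices `𝟙` and
`𝟙 - (m / qₖ) eₖ`: the barycentric coordinates of `y` are `(1 + ⟨q, y⟩)/m` and `qₖ (1 - yₖ)/m`.
So the dual is a lattice polytope as soon as every `qₖ` divides `m`. For `q(n)` we have `m = 30n`,
and each entry `1, 3n, 10n, 15n` divides it.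
-/

open scoped BigOperators Pointwise

/-- The vector `q(n) = (1,…,1,3n,10n,15n) ∈ ℤ^{2n+2}` with `2n-1` ones. -/
def qvec (n : ℕ) : Fin (2 * n + 2) → ℤ := fun i =>
  if (i : ℕ) < 2 * n - 1 then 1
  else if (i : ℕ) = 2 * n - 1 then 3 * n
  else if (i : ℕ) = 2 * n then 10 * n
  else 15 * n

/-- The simplex `Δ_{(1,q(n))} = conv{e_1, …, e_d, -q(n)} ⊆ ℝ^{2n+2}`. -/
noncomputable def deltaQ (n : ℕ) : Set (Fin (2 * n + 2) → ℝ) :=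
  convexHull ℝ
    ((Set.range fun i : Fin (2 * n + 2) => fun j : Fin (2 * n + 2) =>
        if j = i then (1 : ℝ) else 0) ∪
      {fun i => -(qvec n i : ℝ)})

open Finset

section Polar

variable {ι : Type*} [Fintype ι]

lemma sum_smul_mem_convexHull_range {κ E : Type*} [Fintype κ] [AddCommGroup E] [Module ℝ E]
    {p : κ → E} {w : κ → ℝ} (hw₀ : ∀ k, 0 ≤ w k) (hw₁ : ∑ k, w k = 1) :
    ∑ k, w k • p k ∈ convexHull ℝ (Set.range p) :=
  (convex_convexHull ℝ _).sum_mem (fun k _ => hw₀ k) hw₁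
    (fun k _ => subset_convexHull ℝ _ (Set.mem_range_self k))

lemma convex_setOf_forall_mem_dotProduct_le (S : Set (ι → ℝ)) (r : ℝ) :
    Convex ℝ {y : ι → ℝ | ∀ x ∈ S, x ⬝ᵥ y ≤ r} := by
  simp only [Set.ofPred_forall]
  exact convex_iInter₂ fun x _ =>
    convex_halfSpace_le ⟨dotProduct_add x, fun c y => dotProduct_smul c x y⟩ r

lemma setOf_forall_mem_convexHull_dotProduct_le (S : Set (ι → ℝ)) (r : ℝ) :
    {y : ι → ℝ | ∀ x ∈ convexHull ℝ S, x ⬝ᵥ y ≤ r} = {y | ∀ x ∈ S, x ⬝ᵥ y ≤ r} := by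
  ext y
  refine ⟨fun h x hx => h x (subset_convexHull ℝ S hx), fun h => ?_⟩
  exact convexHull_min h
    (convex_halfSpace_le ⟨fun a b => add_dotProduct a b y, fun c x => smul_dotProduct c x y⟩ r)

end Polar

section Simplex

variable {ι : Type*} [Fintype ι]

lemma one_add_sum_pos {q : ι → ℝ} (hq : ∀ i, 0 < q i) : 0 < 1 + ∑ i, q i :=
  add_pos_of_pos_of_nonneg one_pos (sum_nonneg fun i _ => (hq i).le)

def simplexVertex [DecidableEq ι] (q : ι → ℝ) : Option ι → ι → ℝ
  | none => -q
  | some i => Pi.single i 1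

noncomputable def simplexCoord (q x : ι → ℝ) : Option ι → ℝ
  | none => (1 - ∑ i, x i) / (1 + ∑ i, q i)
  | some i => x i + q i * ((1 - ∑ i, x i) / (1 + ∑ i, q i))

lemma sum_simplexCoord {q : ι → ℝ} (hm : 1 + ∑ i, q i ≠ 0) (x : ι → ℝ) :
    ∑ o, simplexCoord q x o = 1 := by
  simp only [Fintype.sum_option, simplexCoord, sum_add_distrib, ← sum_mul]
  field_simp
  ring

lemma sum_simplexCoord_smul_simplexVertex [DecidableEq ι] (q x : ι → ℝ) :
    ∑ o, simplexCoord q x o • simplexVertex q o = x := by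
  ext j
  simp only [Fintype.sum_option, simplexCoord, simplexVertex, Finset.sum_apply, Pi.smul_apply,
    smul_eq_mul, Pi.neg_apply, Pi.single_apply, mul_ite, mul_one, mul_zero, sum_ite_eq, mem_univ,
    if_true]
  ring

lemma continuous_simplexCoord (q : ι → ℝ) (o : Option ι) :
    Continuous fun x => simplexCoord q x o := by
  cases o <;> simp only [simplexCoord] <;> fun_prop

lemma zero_mem_interior_convexHull_simplexVertex [DecidableEq ι] {q : ι → ℝ}
    (hq : ∀ i, 0 < q i) : (0 : ι → ℝ) ∈ interior (convexHull ℝ (Set.range (simplexVertex q))) := by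
  have hm := one_add_sum_pos hq
  refine mem_interior.mpr ⟨{x | ∀ o, 0 < simplexCoord q x o}, fun x hx => ?_, ?_, ?_⟩
  · rw [← sum_simplexCoord_smul_simplexVertex q x]
    exact sum_smul_mem_convexHull_range (fun o => (hx o).le) (sum_simplexCoord hm.ne' x)
  · simp only [Set.ofPred_forall]
    exact isOpen_iInter_of_finite fun o => isOpen_lt continuous_const (continuous_simplexCoord q o)
  · rintro (_ | i)
    · simp only [simplexCoord, Pi.zero_apply, sum_const_zero, sub_zero]
      positivity
    · simp only [simplexCoord, Pi.zero_apply, sum_const_zero, sub_zero, zero_add]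
      exact mul_pos (hq i) (by positivity)

noncomputable def dualVertex [DecidableEq ι] (q : ι → ℝ) : Option ι → ι → ℝ
  | none => 1
  | some k => 1 - Pi.single k ((1 + ∑ i, q i) / q k)

noncomputable def dualCoord (q y : ι → ℝ) : Option ι → ℝ
  | none => (1 + q ⬝ᵥ y) / (1 + ∑ i, q i)
  | some k => q k * (1 - y k) / (1 + ∑ i, q i)

lemma sum_dualCoord {q : ι → ℝ} (hm : 1 + ∑ i, q i ≠ 0) (y : ι → ℝ) :
    ∑ o, dualCoord q y o = 1 := by
  simp only [Fintype.sum_option, dualCoord, ← sum_div, dotProduct, mul_sub, sum_sub_distrib,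
    mul_one]
  field_simp
  ring

lemma sum_dualCoord_smul_dualVertex [DecidableEq ι] {q : ι → ℝ} (hq : ∀ i, 0 < q i)
    (y : ι → ℝ) : ∑ o, dualCoord q y o • dualVertex q o = y := by
  have hm := one_add_sum_pos hq
  have hc : ∀ k, dualCoord q y (some k) * ((1 + ∑ i, q i) / q k) = 1 - y k := fun k => by
    simp only [dualCoord]
    field_simp [(hq k).ne']
  calc ∑ o, dualCoord q y o • dualVertex q o
      = (∑ o, dualCoord q y o) • 1 -
          ∑ k, Pi.single k (dualCoord q y (some k) * ((1 + ∑ i, q i) / q k)) := by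
        simp only [Fintype.sum_option, dualVertex, smul_sub, sum_sub_distrib, add_smul, sum_smul,
          ← Pi.single_smul', smul_eq_mul]
        abel
    _ = 1 - (1 - y) := by
        rw [sum_dualCoord hm.ne', one_smul]
        simp only [hc, univ_sum_single]
        rfl
    _ = y := sub_sub_cancel 1 y

lemma dualCoord_nonneg [DecidableEq ι] {q y : ι → ℝ} (hq : ∀ i, 0 < q i)
    (hy : ∀ o, simplexVertex q o ⬝ᵥ y ≤ 1) (o : Option ι) : 0 ≤ dualCoord q y o := by
  have hm := one_add_sum_pos hq
  rcases o with _ | k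
  · have := hy none
    simp only [simplexVertex, neg_dotProduct] at this
    exact div_nonneg (by linarith) hm.le
  · have := hy (some k)
    simp only [simplexVertex, single_dotProduct, one_mul] at this
    exact div_nonneg (mul_nonneg (hq k).le (by linarith)) hm.le

lemma simplexVertex_dotProduct_dualVertex_le_one [DecidableEq ι] {q : ι → ℝ}
    (hq : ∀ i, 0 < q i) (o o' : Option ι) : simplexVertex q o ⬝ᵥ dualVertex q o' ≤ 1 := by
  have hm := one_add_sum_pos hq
  rcases o with _ | i <;> rcases o' with _ | k
  · simp only [simplexVertex, dualVertex, dotProduct_one, Pi.neg_apply, sum_neg_distrib]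
    linarith
  · simp only [simplexVertex, dualVertex, dotProduct_sub, dotProduct_one, dotProduct_single,
      Pi.neg_apply, sum_neg_distrib, neg_mul, mul_div_cancel₀ _ (hq k).ne']
    linarith
  · simp only [simplexVertex, dualVertex, single_dotProduct, one_mul, Pi.one_apply, le_refl]
  · simp only [simplexVertex, dualVertex, single_dotProduct, one_mul, Pi.sub_apply,
      Pi.one_apply, sub_le_self_iff]
    rw [Pi.single_apply]
    split_ifs
    exacts [(div_pos hm (hq k)).le, le_rfl]

lemma polar_convexHull_simplexVertex [DecidableEq ι] {q : ι → ℝ} (hq : ∀ i, 0 < q i) :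
    {y : ι → ℝ | ∀ x ∈ convexHull ℝ (Set.range (simplexVertex q)), x ⬝ᵥ y ≤ 1} =
      convexHull ℝ (Set.range (dualVertex q)) := by
  simp only [setOf_forall_mem_convexHull_dotProduct_le, Set.forall_mem_range]
  refine subset_antisymm (fun y hy => ?_) (convexHull_min ?_ ?_)
  · rw [← sum_dualCoord_smul_dualVertex hq y]
    exact sum_smul_mem_convexHull_range (dualCoord_nonneg hq hy)
      (sum_dualCoord (one_add_sum_pos hq).ne' y)
  · exact Set.range_subset_iff.2 fun o' o => simplexVertex_dotProduct_dualVertex_le_one hq o o'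
  · simpa only [Set.forall_mem_range] using
      convex_setOf_forall_mem_dotProduct_le (Set.range (simplexVertex q)) 1

end Simplex

section Integral

variable {ι : Type*} [Fintype ι] [DecidableEq ι]

def intDualVertex (q : ι → ℤ) : Option ι → ι → ℤ
  | none => 1
  | some k => 1 - Pi.single k ((1 + ∑ i, q i) / q k)

lemma cast_intDualVertex {q : ι → ℤ} (hq : ∀ i, 0 < q i) (hdvd : ∀ i, q i ∣ 1 + ∑ j, q j)
    (o : Option ι) : (fun i => (intDualVertex q o i : ℝ)) = dualVertex (fun i => (q i : ℝ)) o := by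
  ext i
  rcases o with _ | k
  · simp [intDualVertex, dualVertex]
  · have hk : (q k : ℝ) ≠ 0 := Int.cast_ne_zero.2 (hq k).ne'
    simp only [intDualVertex, dualVertex, Pi.sub_apply, Pi.one_apply, Pi.single_apply]
    split_ifs <;> simp [Int.cast_div (hdvd k) hk]

lemma convexHull_image_intDualVertex {q : ι → ℤ} (hq : ∀ i, 0 < q i)
    (hdvd : ∀ i, q i ∣ 1 + ∑ j, q j) :
    convexHull ℝ ((fun v : ι → ℤ => fun i => (v i : ℝ)) '' ↑(univ.image (intDualVertex q))) =
      convexHull ℝ (Set.range (dualVertex fun i => (q i : ℝ))) := by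
  rw [coe_image, coe_univ, Set.image_univ, ← Set.range_comp]
  congr
  exact funext (cast_intDualVertex hq hdvd)

end Integral

lemma qvec_pos {n : ℕ} (hn : 0 < n) (i : Fin (2 * n + 2)) : 0 < qvec n i := by
  unfold qvec
  split_ifs <;> omega

lemma qvec_dvd (n : ℕ) (i : Fin (2 * n + 2)) : qvec n i ∣ 30 * n := by
  unfold qvec
  split_ifs
  exacts [one_dvd _, ⟨10, by ring⟩, ⟨3, by ring⟩, ⟨2, by ring⟩]

lemma one_add_sum_qvec {n : ℕ} (hn : 0 < n) : 1 + ∑ i, qvec n i = 30 * n := by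
  have hsum : ∑ i, qvec n i = ∑ j ∈ range (2 * n - 1 + 1 + 1 + 1), if j < 2 * n - 1 then 1
      else if j = 2 * n - 1 then 3 * (n : ℤ) else if j = 2 * n then 10 * n else 15 * n := by
    rw [show 2 * n - 1 + 1 + 1 + 1 = 2 * n + 2 by omega, ← Fin.sum_univ_eq_sum_range]
    rfl
  rw [hsum, sum_range_succ, sum_range_succ, sum_range_succ,
    sum_congr rfl fun j hj => if_pos (mem_range.mp hj)]
  simp only [sum_const, card_range, nsmul_eq_mul, mul_one]
  split_ifs <;> omega

lemma deltaQ_eq_convexHull_simplexVertex (n : ℕ) :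
    deltaQ n = convexHull ℝ (Set.range (simplexVertex fun i => (qvec n i : ℝ))) := by
  rw [deltaQ, Option.range_eq, Set.union_singleton]
  congr
  ext i j
  simp [simplexVertex, Pi.single_apply]

theorem stmt6 (n : ℕ) (hn : 2 ≤ n) :
    (0 : Fin (2 * n + 2) → ℝ) ∈ interior (deltaQ n) ∧
    ∃ V : Finset (Fin (2 * n + 2) → ℤ),
      {y : Fin (2 * n + 2) → ℝ | ∀ x ∈ deltaQ n, ∑ i, x i * y i ≤ 1} =
        convexHull ℝ ((fun v : Fin (2 * n + 2) → ℤ => fun i => (v i : ℝ)) '' ↑V) := by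
  have hq : ∀ i, 0 < qvec n i := qvec_pos (by omega)
  have hdvd : ∀ i, qvec n i ∣ 1 + ∑ j, qvec n j := fun i =>
    one_add_sum_qvec (n := n) (by omega) ▸ qvec_dvd n i
  have hqR : ∀ i, (0 : ℝ) < qvec n i := fun i => Int.cast_pos.2 (hq i)
  rw [deltaQ_eq_convexHull_simplexVertex]
  refine ⟨zero_mem_interior_convexHull_simplexVertex hqR, univ.image (intDualVertex (qvec n)), ?_⟩
  rw [convexHull_image_intDualVertex hq hdvd]
  exact polar_convexHull_simplexVertex hqR
end

section
/- For n ≥ 2 set d := 2n+2, q(n) := (1, …, 1, 3n, 10n, 15n) ∈ ℤ^d (with 2n−1 ones), and Δ_n := conv{e_1, …, e_d, −q(n)} ⊆ ℝ^d. Define c_0 = 1, c_1 = 7, c_2 = 15, c_3 = 14, and for j ≥ 4, c_j = 16 if j is even and c_j = 14 if j is odd. Then for every j ≥ 0 there exists N such that for all n ≥ N, the coefficient of X^j in (1−X)^{2n+3}·Ehr_{Δ_n}(X) equals c_j. That is, the h*-polynomials of the Δ_n converge in ℤ[[X]] to the series 1 + 7X + 15X² + 14X³ + 16X⁴ + 14X⁵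 + 16X⁶ + 14X⁷ + ⋯. -/
open scoped BigOperators Pointwise

/-- Coefficients of the limit series `1 + 7X + 15X² + 14X³ + 16X⁴ + 14X⁵ + 16X⁶ + ⋯`. -/
def creflex (j : ℕ) : ℤ :=
  if j = 0 then 1 else if j = 1 then 7 else if j = 2 then 15 else if j = 3 then 14
  else if j % 2 = 0 then 16 else 14

/-!
Write `Q = 1 + ∑ qᵢ`. In barycentric coordinates, `y ∈ t • Δ_(1,q)` iff the weight
`μ = (t - ∑ yᵢ) / Q` of the apex `-q` and the weights `yᵢ + μ qᵢ` of the `eᵢ` are nonnegative.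
For a lattice point `x` divide with remainder, `t - ∑ xᵢ = c Q + b` with `0 ≤ b < Q`; then
`mᵢ = xᵢ + c qᵢ + ⌊b qᵢ / Q⌋` are natural numbers, and `x ↦ (b, c, m)` is a bijection onto the
triples with `c + ∑ mᵢ = t - w(b)`, where `w(b) = b - ∑ ⌊b qᵢ / Q⌋`. Counting the tuples `(c, m)`
gives `Ehr(X) = (∑_{b < Q} X^{w(b)}) / (1 - X)^{d+1}`.

For `q = q(n)` we have `Q = 30n` and `w(b) = b - ⌊b/10⌋ - ⌊b/3⌋ - ⌊b/2⌋` for `b < 30n`,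
independently of `n`. As `b ≤ 15 w(b)`, the coefficient of `X^j` counts all `b` of weight `j`
once `30n > 15j`; and since `w(b + 30) = w(b) + 2` while `w(b) ≤ 4` for `b < 30`, these counts
are 2-periodic from `j = 3` on.
-/

theorem convexHull_range_eq_image_stdSimplex_s7 {R ι E : Type*} [Field R] [LinearOrder R]
    [IsStrictOrderedRing R] [Fintype ι] [AddCommGroup E] [Module R E] (v : ι → E) :
    convexHull R (Set.range v) = (fun w => ∑ i, w i • v i) '' stdSimplex R ι := by
  classical
  have hL : (fun w : ι → R => ∑ i, w i • v i) = Fintype.linearCombination R v := by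
    ext w; simp [Fintype.linearCombination_apply]
  rw [← convexHull_basis_eq_stdSimplex, hL, LinearMap.image_convexHull, ← Set.range_comp]
  congr 2
  ext i
  simp [Fintype.linearCombination_apply, ite_smul]

instance finite_tuples_sum_add_eq (D w t : ℕ) :
    Finite {m : Fin (D + 1) → ℕ // ∑ k, m k + w = t} := by
  refine Set.Finite.to_subtype ((Set.finite_Iic fun _ => t).subset fun m hm k => ?_)
  have := Finset.single_le_sum (fun j _ => Nat.zero_le (m j)) (Finset.mem_univ k)
  have hm : ∑ j, m j + w = t := hm
  show m k ≤ t
  omega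

theorem card_tuples_sum_add_eq_coeff (D w t : ℕ) :
    (Nat.card {m : Fin (D + 1) → ℕ // ∑ k, m k + w = t} : ℤ) =
      PowerSeries.coeff t (PowerSeries.X ^ w * (PowerSeries.invOneSubPow ℤ (D + 1)).val) := by
  rw [PowerSeries.coeff_X_pow_mul', PowerSeries.invOneSubPow_val_succ_eq_mk_add_choose,
    PowerSeries.coeff_mk]
  split_ifs with h
  · have e : {m : Fin (D + 1) → ℕ // ∑ k, m k + w = t} ≃ Sym (Fin (D + 1)) (t - w) :=
      (Equiv.subtypeEquivRight fun m => by omega).trans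
        (Sym.equivNatSumOfFintype (Fin (D + 1)) (t - w)).symm
    rw [Nat.card_congr e, Nat.card_eq_fintype_card, Sym.card_sym_eq_choose, Fintype.card_fin,
      Nat.add_right_comm, Nat.add_sub_cancel, Nat.choose_symm_add]
  · have : IsEmpty {m : Fin (D + 1) → ℕ // ∑ k, m k + w = t} := ⟨fun m => h (by omega)⟩
    simp

section OneQSimplex

variable {d : ℕ} (q : Fin d → ℕ)

def oneQSimplex : Set (Fin d → ℝ) :=
  convexHull ℝ ((Set.range fun i : Fin d => fun j : Fin d => if j = i then (1 : ℝ) else 0) ∪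
    {fun i => -(q i : ℝ)})

def oneQVertex : Fin (d + 1) → Fin d → ℝ :=
  Fin.cons (fun i => -(q i : ℝ)) fun i j => if j = i then 1 else 0

def oneQVol : ℕ := 1 + ∑ i, q i

theorem oneQSimplex_eq_convexHull_range :
    oneQSimplex q = convexHull ℝ (Set.range (oneQVertex q)) := by
  rw [oneQSimplex, oneQVertex, ← Matrix.vecCons, Matrix.range_cons, Set.union_comm]

theorem sum_smul_oneQVertex_apply (w : Fin (d + 1) → ℝ) (j : Fin d) :
    (∑ k, w k • oneQVertex q k) j = w j.succ - w 0 * q j := by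
  simp only [oneQVertex, Finset.sum_apply, Pi.smul_apply, smul_eq_mul, Fin.sum_univ_succ,
    Fin.cons_zero, Fin.cons_succ, mul_ite, mul_one, mul_zero, Finset.sum_ite_eq,
    Finset.mem_univ, if_true]
  ring

theorem cast_oneQVol : (oneQVol q : ℝ) = 1 + ∑ i, (q i : ℝ) := by
  simp [oneQVol]

theorem mem_oneQSimplex_iff (y : Fin d → ℝ) :
    y ∈ oneQSimplex q ↔
      ∑ i, y i ≤ 1 ∧ ∀ i, 0 ≤ (oneQVol q : ℝ) * y i + (1 - ∑ i, y i) * q i := by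
  have hQ : (0 : ℝ) < oneQVol q := by rw [cast_oneQVol]; positivity
  rw [oneQSimplex_eq_convexHull_range, convexHull_range_eq_image_stdSimplex_s7]
  constructor
  · rintro ⟨w, ⟨hw0, hw1⟩, rfl⟩
    simp only [sum_smul_oneQVertex_apply]
    rw [Fin.sum_univ_succ] at hw1
    have hsum : ∑ i, (w i.succ - w 0 * q i) = 1 - oneQVol q * w 0 := by
      rw [Finset.sum_sub_distrib, ← Finset.mul_sum, cast_oneQVol]
      linear_combination hw1
    rw [hsum]
    refine ⟨by nlinarith [hw0 0], fun i => ?_⟩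
    nlinarith [hw0 i.succ]
  · rintro ⟨hsum, hcoord⟩
    set μ := (1 - ∑ i, y i) / oneQVol q
    have hμQ : μ * oneQVol q = 1 - ∑ i, y i := div_mul_cancel₀ _ hQ.ne'
    refine ⟨Fin.cons μ fun i => y i + μ * q i, ⟨fun k => ?_, ?_⟩, ?_⟩
    · refine Fin.cases ?_ (fun i => ?_) k
      · exact div_nonneg (by linarith) hQ.le
      · simp only [Fin.cons_succ]
        have := hcoord i
        nlinarith
    · rw [Fin.sum_univ_succ]
      simp only [Fin.cons_zero, Fin.cons_succ]
      rw [Finset.sum_add_distrib, ← Finset.mul_sum]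
      linear_combination hμQ - μ * cast_oneQVol q
    · ext j
      simp only [sum_smul_oneQVertex_apply, Fin.cons_zero, Fin.cons_succ, add_sub_cancel_right]

theorem mem_smul_oneQSimplex_iff {t : ℝ} (ht : 0 ≤ t) (y : Fin d → ℝ) :
    y ∈ t • oneQSimplex q ↔
      ∑ i, y i ≤ t ∧ ∀ i, 0 ≤ (oneQVol q : ℝ) * y i + (t - ∑ i, y i) * q i := by
  rcases ht.eq_or_lt with rfl | ht
  · have hne : (oneQSimplex q).Nonempty := ⟨_, subset_convexHull ℝ _ (Or.inr rfl)⟩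
    rw [Set.zero_smul_set hne, Set.mem_zero]
    constructor
    · rintro rfl
      simp
    · rintro ⟨hsum, hcoord⟩
      have hsum_nonneg : 0 ≤ ∑ i, y i := by
        have := Finset.sum_nonneg fun i (_ : i ∈ Finset.univ) => hcoord i
        rw [Finset.sum_add_distrib, ← Finset.mul_sum, ← Finset.mul_sum, cast_oneQVol] at this
        linarith
      have hsum0 : ∑ i, y i = 0 := le_antisymm hsum hsum_nonneg
      have hQ : (0 : ℝ) < oneQVol q := by rw [cast_oneQVol]; positivity
      have hy : ∀ i ∈ Finset.univ, 0 ≤ y i := fun i _ => by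
        have := hcoord i
        rw [hsum0, sub_zero, zero_mul, add_zero] at this
        exact nonneg_of_mul_nonneg_right (by linarith) hQ
      funext i
      exact (Finset.sum_eq_zero_iff_of_nonneg hy).1 hsum0 i (Finset.mem_univ i)
  · rw [Set.mem_smul_set_iff_inv_smul_mem₀ ht.ne', mem_oneQSimplex_iff]
    simp only [Pi.smul_apply, smul_eq_mul, ← Finset.mul_sum]
    refine and_congr ?_ (forall_congr' fun i => ?_)
    · rw [inv_mul_le_iff₀ ht, mul_one]
    · have : (oneQVol q : ℝ) * (t⁻¹ * y i) + (1 - t⁻¹ * ∑ i, y i) * q i =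
          t⁻¹ * ((oneQVol q : ℝ) * y i + (t - ∑ i, y i) * q i) := by
        field_simp
      rw [this, mul_nonneg_iff_of_pos_left (inv_pos.2 ht)]

theorem coe_mem_smul_oneQSimplex_iff (t : ℕ) (x : Fin d → ℤ) :
    (fun i => (x i : ℝ)) ∈ (t : ℝ) • oneQSimplex q ↔
      ∑ i, x i ≤ t ∧ ∀ i, 0 ≤ (oneQVol q : ℤ) * x i + (t - ∑ i, x i) * q i := by
  rw [mem_smul_oneQSimplex_iff q t.cast_nonneg]
  norm_cast

theorem oneQVol_pos : 0 < oneQVol q := by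
  simp [oneQVol]

def oneQWeight (b : ℕ) : ℕ := b - ∑ i, b * q i / oneQVol q

theorem oneQWeight_add_sum_div (b : ℕ) :
    oneQWeight q b + ∑ i, b * q i / oneQVol q = b := by
  have hle : ∑ i, b * q i / oneQVol q ≤ b := by
    refine Nat.le_of_mul_le_mul_left ?_ (oneQVol_pos q)
    calc oneQVol q * ∑ i, b * q i / oneQVol q
        = ∑ i, oneQVol q * (b * q i / oneQVol q) := Finset.mul_sum _ _ _
      _ ≤ ∑ i, b * q i := Finset.sum_le_sum fun i _ => Nat.mul_div_le _ _
      _ = b * ∑ i, q i := (Finset.mul_sum _ _ _).symm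
      _ ≤ oneQVol q * b := by rw [mul_comm, oneQVol]; gcongr; omega
  rw [oneQWeight]
  omega

-- The lattice point `x` with data `(b, c, m)`, where `c = m 0`.
def oneQPoint (b : ℕ) (m : Fin (d + 1) → ℕ) : Fin d → ℤ :=
  fun i => m i.succ - m 0 * q i - (b * q i / oneQVol q : ℕ)

theorem sub_sum_oneQPoint {b t : ℕ} {m : Fin (d + 1) → ℕ}
    (hm : ∑ k, m k + oneQWeight q b = t) :
    (t : ℤ) - ∑ i, oneQPoint q b m i = m 0 * oneQVol q + b := by
  have hw : (oneQWeight q b : ℤ) + ∑ i, ((b * q i / oneQVol q : ℕ) : ℤ) = b := by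
    exact_mod_cast oneQWeight_add_sum_div q b
  rw [Fin.sum_univ_succ] at hm
  have ht : (t : ℤ) = m 0 + ∑ i : Fin d, (m i.succ : ℤ) + oneQWeight q b := by
    rw [← hm]; push_cast; rfl
  have hQ : (oneQVol q : ℤ) = 1 + ∑ i, (q i : ℤ) := by simp [oneQVol]
  simp only [oneQPoint, Finset.sum_sub_distrib, ← Finset.mul_sum]
  linear_combination ht + hw - (m 0 : ℤ) * hQ

theorem coe_oneQPoint_mem_smul_oneQSimplex {b t : ℕ} {m : Fin (d + 1) → ℕ}
    (hm : ∑ k, m k + oneQWeight q b = t) :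
    (fun i => (oneQPoint q b m i : ℝ)) ∈ (t : ℝ) • oneQSimplex q := by
  have hsub := sub_sum_oneQPoint q hm
  rw [coe_mem_smul_oneQSimplex_iff]
  refine ⟨by linarith [show (0 : ℤ) ≤ m 0 * oneQVol q + b by positivity], fun i => ?_⟩
  have hfloor : (oneQVol q : ℤ) * (b * q i / oneQVol q : ℕ) ≤ b * q i := by
    exact_mod_cast Nat.mul_div_le _ _
  rw [hsub, oneQPoint]
  nlinarith [show (0 : ℤ) ≤ oneQVol q * m i.succ by positivity]

theorem eq_of_oneQPoint_eq {b b' t : ℕ} {m m' : Fin (d + 1) → ℕ}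
    (hb : b < oneQVol q) (hb' : b' < oneQVol q)
    (hm : ∑ k, m k + oneQWeight q b = t) (hm' : ∑ k, m' k + oneQWeight q b' = t)
    (h : oneQPoint q b m = oneQPoint q b' m') : b = b' ∧ m = m' := by
  have hk : m 0 * oneQVol q + b = m' 0 * oneQVol q + b' := by
    have := sub_sum_oneQPoint q hm
    rw [h, sub_sum_oneQPoint q hm'] at this
    exact_mod_cast this.symm
  have hbb : b = b' := by
    have := congrArg (· % oneQVol q) hk
    simpa [Nat.mul_add_mod, Nat.mod_eq_of_lt hb, Nat.mod_eq_of_lt hb'] using this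
  subst hbb
  have h0 : m 0 = m' 0 := Nat.eq_of_mul_eq_mul_right (oneQVol_pos q) (by omega)
  refine ⟨rfl, funext fun k => Fin.cases h0 (fun i => ?_) k⟩
  have := congrFun h i
  simp only [oneQPoint, h0] at this
  omega

theorem exists_oneQPoint_eq {t : ℕ} {x : Fin d → ℤ}
    (hx : (fun i => (x i : ℝ)) ∈ (t : ℝ) • oneQSimplex q) :
    ∃ b < oneQVol q, ∃ m : Fin (d + 1) → ℕ,
      ∑ k, m k + oneQWeight q b = t ∧ oneQPoint q b m = x := by
  obtain ⟨hsum, hx⟩ := (coe_mem_smul_oneQSimplex_iff q t x).1 hx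
  obtain ⟨k, hk⟩ : ∃ k : ℕ, (t : ℤ) - ∑ i, x i = k :=
    ⟨_, (Int.toNat_of_nonneg (by linarith)).symm⟩
  have hQ := oneQVol_pos q
  set b := k % oneQVol q
  set c := k / oneQVol q
  have hkbc : (k : ℤ) = c * oneQVol q + b := by
    exact_mod_cast (Nat.div_add_mod' k (oneQVol q)).symm
  set φ : Fin d → ℕ := fun i => b * q i / oneQVol q
  have hnonneg : ∀ i, 0 ≤ x i + c * q i + φ i := by
    intro i
    have hfloor : (b * q i : ℤ) < oneQVol q * (φ i + 1) := by
      exact_mod_cast Nat.lt_mul_div_succ _ hQ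
    have := hx i
    rw [hk, hkbc] at this
    by_contra hneg
    nlinarith [show (0 : ℤ) < oneQVol q by exact_mod_cast hQ]
  refine ⟨b, Nat.mod_lt _ hQ, Fin.cons c fun i => (x i + c * q i + φ i).toNat, ?_, ?_⟩
  · have hw : (oneQWeight q b : ℤ) + ∑ i, (φ i : ℤ) = b := by
      exact_mod_cast oneQWeight_add_sum_div q b
    have hQ : (oneQVol q : ℤ) = 1 + ∑ i, (q i : ℤ) := by simp [oneQVol]
    zify
    simp only [Fin.sum_univ_succ, Fin.cons_zero, Fin.cons_succ, Int.toNat_of_nonneg (hnonneg _),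
      Finset.sum_add_distrib, ← Finset.mul_sum]
    linear_combination hw - hk - hkbc - (c : ℤ) * hQ
  · funext i
    simp only [oneQPoint, Fin.cons_succ, Fin.cons_zero, Int.toNat_of_nonneg (hnonneg i)]
    ring

theorem ncard_lattice_smul_oneQSimplex (t : ℕ) :
    {x : Fin d → ℤ | (fun i => (x i : ℝ)) ∈ (t : ℝ) • oneQSimplex q}.ncard =
      ∑ b ∈ Finset.range (oneQVol q),
        Nat.card {m : Fin (d + 1) → ℕ // ∑ k, m k + oneQWeight q b = t} := by
  let f : (Σ b : Fin (oneQVol q), {m : Fin (d + 1) → ℕ // ∑ k, m k + oneQWeight q b = t}) →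
      {x : Fin d → ℤ | (fun i => (x i : ℝ)) ∈ (t : ℝ) • oneQSimplex q} := fun p =>
    ⟨oneQPoint q p.1 p.2.1, coe_oneQPoint_mem_smul_oneQSimplex q p.2.2⟩
  have hf : Function.Bijective f := by
    refine ⟨fun ⟨b, m, hm⟩ ⟨b', m', hm'⟩ h => ?_, fun ⟨x, hx⟩ => ?_⟩
    · obtain ⟨hb, rfl⟩ := eq_of_oneQPoint_eq q b.2 b'.2 hm hm' (congrArg Subtype.val h)
      obtain rfl := Fin.ext hb
      rfl
    · obtain ⟨b, hb, m, hm, rfl⟩ := exists_oneQPoint_eq q hx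
      exact ⟨⟨⟨b, hb⟩, m, hm⟩, rfl⟩
  rw [← Nat.card_coe_set_eq, ← Nat.card_congr (Equiv.ofBijective f hf), Nat.card_sigma,
    Fin.sum_univ_eq_sum_range
      (fun b => Nat.card {m : Fin (d + 1) → ℕ // ∑ k, m k + oneQWeight q b = t})]

theorem ehrhartSeries_oneQSimplex :
    ehrhartSeries (oneQSimplex q) =
      (∑ b ∈ Finset.range (oneQVol q), PowerSeries.X ^ oneQWeight q b) *
        (PowerSeries.invOneSubPow ℤ (d + 1)).val := by
  ext t
  rw [ehrhartSeries, PowerSeries.coeff_mk, ncard_lattice_smul_oneQSimplex, Finset.sum_mul,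
    map_sum]
  push_cast
  simp only [card_tuples_sum_add_eq_coeff]

theorem one_sub_X_pow_mul_ehrhartSeries_oneQSimplex :
    (1 - PowerSeries.X) ^ (d + 1) * ehrhartSeries (oneQSimplex q) =
      ∑ b ∈ Finset.range (oneQVol q), PowerSeries.X ^ oneQWeight q b := by
  rw [ehrhartSeries_oneQSimplex, mul_left_comm, ← PowerSeries.invOneSubPow_inv_eq_one_sub_pow,
    Units.inv_val, mul_one]

end OneQSimplex

theorem qvec_nonneg (n : ℕ) (i : Fin (2 * n + 2)) : 0 ≤ qvec n i := by
  unfold qvec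
  split_ifs <;> positivity

theorem deltaQ_eq_oneQSimplex (n : ℕ) :
    deltaQ n = oneQSimplex fun i => (qvec n i).toNat := by
  unfold deltaQ oneQSimplex
  simp only [← Int.cast_natCast (R := ℝ), Int.toNat_of_nonneg (qvec_nonneg n _)]

theorem sum_comp_qvec {M : Type*} [AddCommMonoid M] {n : ℕ} (hn : 1 ≤ n) (g : ℤ → M) :
    ∑ i, g (qvec n i) = (2 * n - 1) • g 1 + g (3 * n) + g (10 * n) + g (15 * n) := by
  have e : 2 * n + 2 = (2 * n - 1) + 3 := by omega
  rw [← (finCongr e).symm.sum_comp, Fin.sum_univ_add, Fin.sum_univ_three]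
  simp (disch := omega) [qvec, if_neg, add_assoc]

theorem oneQVol_qvec {n : ℕ} (hn : 1 ≤ n) : oneQVol (fun i => (qvec n i).toNat) = 30 * n := by
  rw [oneQVol, sum_comp_qvec hn Int.toNat]
  simp only [Int.toNat_one, smul_eq_mul, mul_one]
  omega

def qvecWeight (b : ℕ) : ℕ := b - b / 10 - b / 3 - b / 2

theorem oneQWeight_qvec {n b : ℕ} (hn : 1 ≤ n) (hb : b < 30 * n) :
    oneQWeight (fun i => (qvec n i).toNat) b = qvecWeight b := by
  have hdiv (k c : ℕ) (hk : k * c = 30) : b * (c * n) / (30 * n) = b / k := by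
    have hc : 0 < c * n := Nat.mul_pos (Nat.pos_of_mul_pos_left (by omega : 0 < k * c)) hn
    rw [← hk, mul_assoc, Nat.mul_div_mul_right _ _ hc]
  rw [oneQWeight, oneQVol_qvec hn, sum_comp_qvec hn fun a => b * a.toNat / (30 * n)]
  have h3 : (3 * (n : ℤ)).toNat = 3 * n := by omega
  have h10 : (10 * (n : ℤ)).toNat = 10 * n := by omega
  have h15 : (15 * (n : ℤ)).toNat = 15 * n := by omega
  simp only [Int.toNat_one, mul_one, Nat.div_eq_of_lt hb, smul_zero, zero_add, h3, h10, h15,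
    hdiv 10 3 rfl, hdiv 3 10 rfl, hdiv 2 15 rfl, qvecWeight]
  omega

theorem qvecWeight_add_thirty (b : ℕ) : qvecWeight (b + 30) = qvecWeight b + 2 := by
  unfold qvecWeight
  omega

theorem le_fifteen_mul_qvecWeight (b : ℕ) : b ≤ 15 * qvecWeight b := by
  unfold qvecWeight
  omega

theorem qvecWeight_le_four_of_lt {b : ℕ} (hb : b < 30) : qvecWeight b ≤ 4 := by
  unfold qvecWeight
  omega

theorem filter_qvecWeight_eq_of_lt {j M : ℕ} (hM : 15 * j < M) :
    (Finset.range M).filter (qvecWeight · = j) =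
      (Finset.range (15 * j + 1)).filter (qvecWeight · = j) := by
  ext b
  simp only [Finset.mem_filter, Finset.mem_range, and_congr_left_iff]
  rintro rfl
  have := le_fifteen_mul_qvecWeight b
  omega

theorem card_filter_qvecWeight_add_two {j : ℕ} (hj : 3 ≤ j) (M : ℕ) :
    ((Finset.range (M + 30)).filter (qvecWeight · = j + 2)).card =
      ((Finset.range M).filter (qvecWeight · = j)).card := by
  have hshift : (Finset.range (M + 30)).filter (qvecWeight · = j + 2) =
      ((Finset.range M).filter (qvecWeight · = j)).image (· + 30) := by
    ext b
    simp only [Finset.mem_filter, Finset.mem_range, Finset.mem_image]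
    constructor
    · rintro ⟨hb, hw⟩
      have h30 : 30 ≤ b := by
        by_contra h
        have := qvecWeight_le_four_of_lt (not_le.mp h)
        omega
      have := qvecWeight_add_thirty (b - 30)
      rw [Nat.sub_add_cancel h30] at this
      exact ⟨b - 30, ⟨by omega, by omega⟩, by omega⟩
    · rintro ⟨a, ⟨ha, hw⟩, rfl⟩
      exact ⟨by omega, by rw [qvecWeight_add_thirty, hw]⟩
  rw [hshift, Finset.card_image_of_injective _ (add_left_injective 30)]

theorem creflex_add_two {j : ℕ} (hj : 3 ≤ j) : creflex (j + 2) = creflex j := by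
  rcases hj.eq_or_lt with rfl | hj
  · rfl
  · simp (disch := omega) only [creflex, if_neg, Nat.add_mod_right]

theorem card_filter_qvecWeight_eq {j M : ℕ} (hM : 15 * j < M) :
    (((Finset.range M).filter (qvecWeight · = j)).card : ℤ) = creflex j := by
  induction j using Nat.strong_induction_on generalizing M with
  | _ j ih =>
    by_cases hj : j ≤ 4
    · rw [filter_qvecWeight_eq_of_lt hM]
      interval_cases j <;> decide
    · obtain ⟨j, rfl⟩ := Nat.exists_eq_add_of_le' (by omega : 2 ≤ j)
      obtain ⟨M, rfl⟩ := Nat.exists_eq_add_of_le' (by omega : 30 ≤ M)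
      rw [card_filter_qvecWeight_add_two (by omega), ih j (by omega) (by omega),
        creflex_add_two (by omega)]

theorem stmt7 (j : ℕ) :
    ∃ N : ℕ, 2 ≤ N ∧ ∀ n : ℕ, N ≤ n →
      PowerSeries.coeff (R := ℤ) j
        ((1 - PowerSeries.X : PowerSeries ℤ) ^ (2 * n + 3) * ehrhartSeries (deltaQ n)) =
        creflex j := by
  refine ⟨j + 2, by omega, fun n hn => ?_⟩
  have hn1 : 1 ≤ n := by omega
  rw [deltaQ_eq_oneQSimplex, show 2 * n + 3 = 2 * n + 2 + 1 from rfl,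
    one_sub_X_pow_mul_ehrhartSeries_oneQSimplex, oneQVol_qvec hn1, map_sum]
  simp only [PowerSeries.coeff_X_pow, Finset.sum_boole]
  rw [Finset.filter_congr fun b hb => by
    rw [oneQWeight_qvec hn1 (Finset.mem_range.mp hb), eq_comm]]
  exact card_filter_qvecWeight_eq (by omega)
end

section
/- Fix integers m ≥ 2 and d ≥ 3, and let P_{m,d} ⊆ ℝ^{d−1} be the (d−1)-dimensional simplex with vertices u_0 = 0, u_1 = e_1, and u_j = e_{j−1} + m·e_j for 2 ≤ j ≤ d−1. Then the map sending a fundamental parallelepiped point λ = (λ_0, …, λ_{d−1}) of P_{m,d} with λ ≠ 0 to its coordinate λ_2 is injective, and its image is exactly the set of rational numbers of the form b/m^k with 1 ≤ k ≤ d−2, 0 < b < m^k, and m ∤ b. Consequently, the total number of fundamental parallelepiped points of P_{m,d} (including λ = 0) is m^{d−2}. -/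
open scoped BigOperators Pointwise

/-- Vertices of the simplex `P_{m,d} ⊆ ℝ^{d-1}`: `u_0 = 0`, `u_1 = e_1`,
`u_j = e_{j-1} + m e_j` for `2 ≤ j ≤ d-1` (coordinates are 0-indexed). -/
def Pvert (m d : ℕ) : Fin d → Fin (d - 1) → ℝ := fun j i =>
  if (j : ℕ) = 0 then 0
  else if (j : ℕ) = 1 then (if (i : ℕ) = 0 then 1 else 0)
  else if (i : ℕ) = (j : ℕ) - 2 then 1
  else if (i : ℕ) = (j : ℕ) - 1 then (m : ℝ)
  else 0

/-!
Write `x = λ₂` and extend `λ` by zero beyond index `d - 1`. The coordinate conditions read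
`λ₁ + λ₂ ∈ ℤ` and `m λⱼ + λⱼ₊₁ ∈ ℤ` for `2 ≤ j ≤ d - 1`. Since `0 ≤ λᵢ < 1`, all of them but the
last one determine `λ₁, λ₃, …, λ_{d-1}` from `x` as fractional parts, and then `λ₀` from the
integrality of `∑ λᵢ`. As `λⱼ ≡ (-1)ʲ mʲ⁻² x (mod ℤ)`, the last condition `m λ_{d-1} ∈ ℤ` says
exactly `m^(d-2) x ∈ ℤ`. Hence `λ ↦ λ₂` is a bijection onto `[0, 1) ∩ m^-(d-2) ℤ`, a set with
`m^(d-2)` elements whose nonzero elements are the reduced fractions `b / mᵏ`, `1 ≤ k ≤ d - 2`.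
-/

open Finset

section FloorRing

variable {R : Type*} [Ring R] [LinearOrder R] [FloorRing R] [IsOrderedRing R]

lemma Int.fract_neg_eq_of_add_eq_intCast {a b : R} (hb₀ : 0 ≤ b) (hb₁ : b < 1) {z : ℤ}
    (h : a + b = z) : Int.fract (-a) = b :=
  Int.fract_eq_iff.2 ⟨hb₀, hb₁, -z, by rw [Int.cast_neg, ← h]; abel⟩

omit [IsOrderedRing R] in
lemma Int.exists_add_fract_neg_eq_intCast (a : R) : ∃ z : ℤ, a + Int.fract (-a) = z :=
  ⟨-⌊-a⌋, by rw [Int.fract, Int.cast_neg]; abel⟩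

end FloorRing

def fracGrid (m e : ℕ) : Set ℝ := {x | 0 ≤ x ∧ x < 1 ∧ ∃ z : ℤ, (m : ℝ) ^ e * x = z}

lemma fracGrid_eq_image {m : ℕ} (hm : m ≠ 0) (e : ℕ) :
    fracGrid m e = (fun a : ℕ => (a : ℝ) / m ^ e) '' Set.Iio (m ^ e) := by
  have hpow : (0 : ℝ) < (m : ℝ) ^ e := by positivity
  ext x
  constructor
  · rintro ⟨hx₀, hx₁, z, hz⟩
    have hz₀ : 0 ≤ z := by exact_mod_cast hz ▸ mul_nonneg hpow.le hx₀
    have hz₁ : (z : ℝ) < (m : ℝ) ^ e := hz ▸ mul_lt_of_lt_one_right hpow hx₁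
    lift z to ℕ using hz₀
    refine ⟨z, by exact_mod_cast hz₁, ?_⟩
    rw [Int.cast_natCast] at hz
    rw [div_eq_iff hpow.ne', ← hz, mul_comm]
  · rintro ⟨a, ha, rfl⟩
    refine ⟨by positivity, (div_lt_one hpow).2 (by exact_mod_cast ha), a, ?_⟩
    simp only [Int.cast_natCast]
    field_simp

lemma ncard_fracGrid {m : ℕ} (hm : m ≠ 0) (e : ℕ) : (fracGrid m e).ncard = m ^ e := by
  have hpow : (m : ℝ) ^ e ≠ 0 := by positivity
  have hinj : Set.InjOn (fun a : ℕ => (a : ℝ) / m ^ e) (Set.Iio (m ^ e)) := fun a _ b _ hab =>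
    Nat.cast_injective ((div_left_inj' hpow).1 hab)
  rw [fracGrid_eq_image hm, hinj.ncard_image, ← Finset.coe_Iio, Set.ncard_coe_finset, Nat.card_Iio]

lemma fracGrid_diff_zero {m : ℕ} (hm : 2 ≤ m) (e : ℕ) :
    fracGrid m e \ {0} = {x | ∃ k b : ℕ, 1 ≤ k ∧ k ≤ e ∧ 0 < b ∧ b < m ^ k ∧ ¬ m ∣ b ∧
      x = (b : ℝ) / (m : ℝ) ^ k} := by
  rw [fracGrid_eq_image (by omega)]
  ext x
  simp only [Set.mem_sdiff, Set.mem_image, Set.mem_Iio, Set.mem_singleton_iff, Set.mem_ofPred_eq]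
  constructor
  · rintro ⟨⟨a, ha, rfl⟩, hx⟩
    have ha₀ : a ≠ 0 := by rintro rfl; simp at hx
    obtain ⟨v, b, hb, rfl⟩ := Nat.exists_eq_pow_mul_and_not_dvd ha₀ m (by omega)
    have hb₀ : 0 < b := Nat.pos_of_ne_zero (by rintro rfl; simp at ha₀)
    have hve : v < e := (Nat.pow_lt_pow_iff_right (by omega)).1
      ((Nat.le_mul_of_pos_right _ hb₀).trans_lt ha)
    have hsplit : m ^ e = m ^ v * m ^ (e - v) := by rw [← pow_add]; congr 1; omega
    refine ⟨e - v, b, by omega, by omega, hb₀, ?_, hb, ?_⟩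
    · rw [hsplit] at ha
      exact Nat.lt_of_mul_lt_mul_left ha
    · rw [show (m : ℝ) ^ e = (m ^ e : ℕ) by push_cast; rfl, hsplit]
      push_cast
      field_simp
  · rintro ⟨k, b, hk₁, hke, hb₀, hb, -, rfl⟩
    have hsplit : m ^ e = m ^ (e - k) * m ^ k := by rw [← pow_add]; congr 1; omega
    refine ⟨⟨m ^ (e - k) * b, ?_, ?_⟩, by positivity⟩
    · rw [hsplit]
      exact Nat.mul_lt_mul_of_pos_left hb (by positivity)
    · rw [show (m : ℝ) ^ e = (m ^ e : ℕ) by push_cast; rfl, hsplit]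
      push_cast
      field_simp

def extendByZero {M : Type*} [Zero M] {d : ℕ} (f : Fin d → M) (c : ℕ) : M :=
  if h : c < d then f ⟨c, h⟩ else 0

@[simp]
lemma extendByZero_val {M : Type*} [Zero M] {d : ℕ} (f : Fin d → M) (i : Fin d) :
    extendByZero f i = f i :=
  dif_pos i.isLt

lemma extendByZero_of_le {M : Type*} [Zero M] {d c : ℕ} (f : Fin d → M) (h : d ≤ c) :
    extendByZero f c = 0 :=
  dif_neg (by omega)

lemma sum_mul_Pvert (m : ℕ) {d : ℕ} (lam : Fin d → ℝ) (j : Fin (d - 1)) :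
    ∑ i, lam i * Pvert m d i j =
      (if (j : ℕ) = 0 then 1 else (m : ℝ)) * extendByZero lam (j + 1) +
        extendByZero lam (j + 2) := by
  set c : ℝ := if (j : ℕ) = 0 then 1 else (m : ℝ)
  set L := extendByZero lam
  have hterm : ∀ i : Fin d, lam i * Pvert m d i j =
      (if (i : ℕ) = j + 1 then c * L i else 0) + (if (i : ℕ) = j + 2 then L i else 0) := by
    intro i
    have hj := j.isLt
    simp only [L, c, extendByZero_val, Pvert]
    split_ifs <;> first | ring1 | (exfalso; omega)
  rw [Finset.sum_congr rfl fun i _ => hterm i, Fin.sum_univ_eq_sum_range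
      (fun k => (if k = j + 1 then c * L k else 0) + if k = j + 2 then L k else 0),
    sum_add_distrib, sum_ite_eq', sum_ite_eq']
  simp only [mem_range]
  split_ifs <;> simp_all [L, extendByZero_of_le, Nat.le_of_not_lt]

lemma isFPP_Pvert_iff (m : ℕ) {d : ℕ} (hd : 2 ≤ d) (lam : Fin d → ℝ) :
    IsFPP (Pvert m d) lam ↔ (∀ i, 0 ≤ lam i ∧ lam i < 1) ∧ (∃ z : ℤ, ∑ i, lam i = z) ∧
      (∃ z : ℤ, extendByZero lam 1 + extendByZero lam 2 = z) ∧
      ∀ j, 2 ≤ j → j < d → ∃ z : ℤ, m * extendByZero lam j + extendByZero lam (j + 1) = z := by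
  refine and_congr_right' (and_congr_right' ?_)
  simp only [sum_mul_Pvert]
  constructor
  · intro h
    refine ⟨by simpa using h ⟨0, by omega⟩, fun j hj hjd => ?_⟩
    obtain ⟨k, rfl⟩ := Nat.exists_eq_add_of_le' hj
    simpa [add_assoc] using h ⟨k + 1, by omega⟩
  · rintro ⟨h₀, hstep⟩ ⟨_ | k, hk⟩
    · simpa using h₀
    · simpa [add_assoc] using hstep (k + 2) (by omega) (by omega)

/-- The coordinates `λ₁, λ₂, …` of the point with `λ₂ = fract x`; the value at `0` is a dummy,
`λ₀` is set in `pvertFPP`. -/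
noncomputable def tailCoord (m : ℕ) (x : ℝ) : ℕ → ℝ
  | 0 => 0
  | 1 => Int.fract (-x)
  | 2 => Int.fract x
  | j + 3 => Int.fract (-(m * tailCoord m x (j + 2)))

lemma tailCoord_succ {m : ℕ} {x : ℝ} {j : ℕ} (hj : 2 ≤ j) :
    tailCoord m x (j + 1) = Int.fract (-(m * tailCoord m x j)) := by
  obtain ⟨k, rfl⟩ := Nat.exists_eq_add_of_le' hj
  rfl

lemma tailCoord_nonneg (m : ℕ) (x : ℝ) (j : ℕ) : 0 ≤ tailCoord m x j := by
  rcases j with _ | _ | _ | j <;> simp [tailCoord, Int.fract_nonneg]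

lemma tailCoord_lt_one (m : ℕ) (x : ℝ) (j : ℕ) : tailCoord m x j < 1 := by
  rcases j with _ | _ | _ | j <;> simp [tailCoord, Int.fract_lt_one]

@[simp]
lemma tailCoord_zero_left (m j : ℕ) : tailCoord m 0 j = 0 := by
  induction j using Nat.strong_induction_on with
  | _ j ih => rcases j with _ | _ | _ | j <;> simp [tailCoord, ih]

lemma exists_tailCoord_add_two_eq (m : ℕ) (x : ℝ) (j : ℕ) :
    ∃ z : ℤ, tailCoord m x (j + 2) = (-1) ^ j * m ^ j * x + z := by
  induction j with
  | zero =>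
    refine ⟨-⌊x⌋, ?_⟩
    rw [show tailCoord m x (0 + 2) = Int.fract x from rfl, Int.fract]
    simp [sub_eq_add_neg]
  | succ j ih =>
    obtain ⟨z, hz⟩ := ih
    refine ⟨-(m * z) - ⌊-(m * tailCoord m x (j + 2))⌋, ?_⟩
    rw [tailCoord_succ (by omega), Int.fract, hz]
    push_cast
    ring

lemma exists_mul_tailCoord_eq_intCast_iff (m : ℕ) (x : ℝ) (j : ℕ) :
    (∃ z : ℤ, m * tailCoord m x (j + 2) = z) ↔ ∃ z : ℤ, (m : ℝ) ^ (j + 1) * x = z := by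
  obtain ⟨z, hz⟩ := exists_tailCoord_add_two_eq m x j
  have key : m * tailCoord m x (j + 2) = (-1) ^ j * ((m : ℝ) ^ (j + 1) * x) + (m * z : ℤ) := by
    rw [hz]; push_cast; ring
  rw [key]
  push_cast
  constructor
  · rintro ⟨w, hw⟩
    have hsign : ((-1 : ℝ) ^ j) ^ 2 = 1 := by rw [← pow_mul, mul_comm, pow_mul]; norm_num
    refine ⟨(-1) ^ j * (w - m * z), ?_⟩
    push_cast
    linear_combination (-1 : ℝ) ^ j * hw - (m : ℝ) ^ (j + 1) * x * hsign
  · rintro ⟨w, hw⟩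
    exact ⟨(-1) ^ j * w + m * z, by rw [hw]; push_cast; ring⟩

noncomputable def pvertFPP (m d : ℕ) (x : ℝ) : Fin d → ℝ := fun i =>
  if (i : ℕ) = 0 then Int.fract (-∑ j : Fin d, tailCoord m x j) else tailCoord m x i

lemma pvertFPP_of_ne_zero {m d : ℕ} {x : ℝ} {i : Fin d} (hi : (i : ℕ) ≠ 0) :
    pvertFPP m d x i = tailCoord m x i :=
  if_neg hi

@[simp]
lemma pvertFPP_zero_left (m d : ℕ) : pvertFPP m d 0 = 0 := by
  ext i
  simp [pvertFPP]

lemma extendByZero_pvertFPP {m d c : ℕ} {x : ℝ} (hc : c ≠ 0) (hcd : c < d) :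
    extendByZero (pvertFPP m d x) c = tailCoord m x c :=
  (dif_pos hcd).trans (pvertFPP_of_ne_zero hc)

lemma sum_eq_add_sum_tailCoord {m d : ℕ} {x : ℝ} (hd : 0 < d) {lam : Fin d → ℝ}
    (h : ∀ i : Fin d, (i : ℕ) ≠ 0 → lam i = tailCoord m x i) :
    ∑ i, lam i = lam ⟨0, hd⟩ + ∑ i : Fin d, tailCoord m x i := by
  rw [Fintype.sum_eq_add_sum_compl ⟨0, hd⟩ lam,
    Fintype.sum_eq_add_sum_compl ⟨0, hd⟩ fun i : Fin d => tailCoord m x i]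
  simp only [tailCoord, zero_add]
  refine congrArg _ (sum_congr rfl fun i hi => h i ?_)
  simpa [Fin.ext_iff] using hi

lemma isFPP_pvertFPP {m d : ℕ} (hd : 3 ≤ d) {x : ℝ} (hx : ∃ z : ℤ, (m : ℝ) ^ (d - 2) * x = z) :
    IsFPP (Pvert m d) (pvertFPP m d x) := by
  rw [isFPP_Pvert_iff m (by omega)]
  refine ⟨fun i => ?_, ?_, ?_, fun j hj hjd => ?_⟩
  · by_cases hi : (i : ℕ) = 0
    · simp [pvertFPP, hi, Int.fract_nonneg, Int.fract_lt_one]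
    · rw [pvertFPP_of_ne_zero hi]
      exact ⟨tailCoord_nonneg m x i, tailCoord_lt_one m x i⟩
  · rw [sum_eq_add_sum_tailCoord (by omega) fun i hi => pvertFPP_of_ne_zero hi, add_comm]
    exact Int.exists_add_fract_neg_eq_intCast _
  · rw [extendByZero_pvertFPP one_ne_zero (by omega), extendByZero_pvertFPP two_ne_zero (by omega)]
    exact ⟨-⌊-x⌋ - ⌊x⌋, by simp only [tailCoord, Int.fract]; push_cast; ring⟩
  · rw [extendByZero_pvertFPP (by omega) hjd]
    rcases (Nat.succ_le_of_lt hjd).lt_or_eq with hj₁ | hj₁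
    · rw [extendByZero_pvertFPP (by omega) hj₁, tailCoord_succ hj]
      exact Int.exists_add_fract_neg_eq_intCast _
    · obtain ⟨k, rfl⟩ := Nat.exists_eq_add_of_le' hj
      rw [extendByZero_of_le _ hj₁.ge, add_zero, exists_mul_tailCoord_eq_intCast_iff]
      rwa [show d - 2 = k + 1 by omega] at hx

lemma extendByZero_eq_tailCoord_of_isFPP {m d : ℕ} (hd : 3 ≤ d) {lam : Fin d → ℝ}
    (h : IsFPP (Pvert m d) lam) {c : ℕ} (hc : c ≠ 0) (hcd : c < d) :
    extendByZero lam c = tailCoord m (lam ⟨2, by omega⟩) c := by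
  rw [isFPP_Pvert_iff m (by omega)] at h
  obtain ⟨hbound, -, ⟨z, h₁₂⟩, hstep⟩ := h
  set x := lam ⟨2, by omega⟩
  have hL : ∀ c < d, 0 ≤ extendByZero lam c ∧ extendByZero lam c < 1 := fun c hc =>
    extendByZero_val lam ⟨c, hc⟩ ▸ hbound ⟨c, hc⟩
  have htail : ∀ c, 2 ≤ c → c < d → extendByZero lam c = tailCoord m x c := by
    intro c hc
    induction c, hc using Nat.le_induction with
    | base =>
      exact fun _ =>
        (extendByZero_val lam ⟨2, by omega⟩).trans (Int.fract_eq_self.2 (hbound _)).symm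
    | succ c hc ih =>
      intro hcd
      obtain ⟨z, hz⟩ := hstep c hc (by omega)
      rw [tailCoord_succ hc, ← ih (by omega)]
      exact (Int.fract_neg_eq_of_add_eq_intCast (hL _ hcd).1 (hL _ hcd).2 hz).symm
  rcases Nat.lt_or_ge c 2 with hc₂ | hc₂
  · obtain rfl : c = 1 := by omega
    rw [add_comm, show extendByZero lam 2 = x from dif_pos _] at h₁₂
    exact (Int.fract_neg_eq_of_add_eq_intCast (hL 1 hcd).1 (hL 1 hcd).2 h₁₂).symm
  · exact htail c hc₂ hcd

lemma eq_pvertFPP_of_isFPP {m d : ℕ} (hd : 3 ≤ d) {lam : Fin d → ℝ} (h : IsFPP (Pvert m d) lam) :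
    lam = pvertFPP m d (lam ⟨2, by omega⟩) := by
  have htail : ∀ i : Fin d, (i : ℕ) ≠ 0 → lam i = tailCoord m (lam ⟨2, by omega⟩) i := fun i hi =>
    (extendByZero_val lam i).symm.trans (extendByZero_eq_tailCoord_of_isFPP hd h hi i.isLt)
  obtain ⟨z, hz⟩ := h.2.1
  rw [sum_eq_add_sum_tailCoord (by omega) htail, add_comm] at hz
  ext ⟨_ | i, hi⟩
  · simp only [pvertFPP]
    exact (Int.fract_neg_eq_of_add_eq_intCast (h.1 _).1 (h.1 _).2 hz).symm
  · rw [pvertFPP_of_ne_zero (Nat.succ_ne_zero i), htail _ (Nat.succ_ne_zero i)]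

lemma mem_fracGrid_of_isFPP {m d : ℕ} (hd : 3 ≤ d) {lam : Fin d → ℝ} (h : IsFPP (Pvert m d) lam) :
    lam ⟨2, by omega⟩ ∈ fracGrid m (d - 2) := by
  refine ⟨(h.1 _).1, (h.1 _).2, ?_⟩
  obtain ⟨z, hz⟩ := ((isFPP_Pvert_iff m (by omega) lam).1 h).2.2.2 (d - 1) (by omega) (by omega)
  rw [extendByZero_of_le (c := d - 1 + 1) lam (by omega), add_zero,
    extendByZero_eq_tailCoord_of_isFPP hd h (by omega) (by omega),
    show d - 1 = (d - 3) + 2 by omega] at hz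
  rw [show d - 2 = (d - 3) + 1 by omega, ← exists_mul_tailCoord_eq_intCast_iff]
  exact ⟨z, hz⟩

theorem bijOn_isFPP_Pvert {m d : ℕ} (hd : 3 ≤ d) :
    Set.BijOn (fun lam : Fin d → ℝ => lam ⟨2, by omega⟩) {lam | IsFPP (Pvert m d) lam}
      (fracGrid m (d - 2)) := by
  refine ⟨fun lam h => mem_fracGrid_of_isFPP hd h, fun lam h mu h' heq => ?_, fun x hx => ?_⟩
  · rw [eq_pvertFPP_of_isFPP hd h, eq_pvertFPP_of_isFPP hd h']
    exact congrArg _ heq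
  · refine ⟨pvertFPP m d x, isFPP_pvertFPP hd hx.2.2, ?_⟩
    simp [pvertFPP_of_ne_zero, tailCoord, Int.fract_eq_self.2 ⟨hx.1, hx.2.1⟩]

theorem stmt8 (m d : ℕ) (hm : 2 ≤ m) (hd : 3 ≤ d) :
    Set.InjOn (fun lam : Fin d → ℝ => lam ⟨2, by omega⟩)
      {lam : Fin d → ℝ | IsFPP (Pvert m d) lam ∧ lam ≠ 0} ∧
    (fun lam : Fin d → ℝ => lam ⟨2, by omega⟩) ''
        {lam : Fin d → ℝ | IsFPP (Pvert m d) lam ∧ lam ≠ 0} =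
      {x : ℝ | ∃ k b : ℕ, 1 ≤ k ∧ k ≤ d - 2 ∧ 0 < b ∧ b < m ^ k ∧ ¬ (m ∣ b) ∧
        x = (b : ℝ) / (m : ℝ) ^ k} ∧
    Set.ncard {lam : Fin d → ℝ | IsFPP (Pvert m d) lam} = m ^ (d - 2) := by
  have hbij := bijOn_isFPP_Pvert (m := m) hd
  have hzero : IsFPP (Pvert m d) 0 := by
    simpa using isFPP_pvertFPP (m := m) hd (x := 0) ⟨0, by simp⟩
  have hbij₀ := hbij.sdiff_singleton hzero
  refine ⟨hbij₀.injOn, ?_, ?_⟩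
  · rw [← fracGrid_diff_zero hm]
    exact hbij₀.image_eq
  · rw [hbij.ncard_eq, ncard_fracGrid (by omega)]
end
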